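/- arXiv:1401.2244 — 2 statements merged into one kernel-verified Lean document; each statement's English description precedes it below -/
import Mathlib

section
/- Let Γ ⊂ ℝ² be a lattice, let c₂ ∈ ℝ with c₂ ≠ 0, let a₁₁, a₁₂, a₂₂ be real constants, and let λ : ℝ² → ℝ be a smooth Γ-periodic function satisfying λ_xy(λ_yyyy − λ_xxxx) + 3(λ_yyy λ_xyy − λ_xxy λ_xxx) + 2(λ_yy λ_xyyy − λ_xx λ_xxxy) + 4a₂₂ λ_xyyy − 4a₁₁ λ_xxxy + 2a₁₂(λ_yyyy − λ_xxxx) = 0 and Δλ + 2(a₁₁ + a₂₂) > 0 everywhere. Set f(x,y) = λ(x,y) + a₁₁ x² + 2a₁₂ x y + a₂₂ y², Λ = Δf/(2c₂), a₁ = 2c₂ f_xy/Δf, and let a₀ : ℝ² → ℝ be a smooth function satisfying a₀ₓ = −(1/(Δf)²)(c₂ f_yyy f_xy + c₂ f_xy f_xxy + 2a₀ Δf (f_xxx + f_xyy)) and a₀_y = (1/(Δf)²)(2 f_yy ((c₂ − a₀) f_yyy − a₀ f_xxy) − 2 f_xx (c₂ f_xxy + a₀ (f_yyy + f_xxy)) −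 c₂ f_xy (f_xyy + f_xxx)). Set a₂ = −2c₂ f_yy/Δf + 2a₀, a₃ = a₁, a₄ = c₂ + a₂ − a₀, and assume {H, F} ≡ 0, where H = (p₁² + p₂²)/(2Λ) and F = a₀ p₁⁴ + a₁ p₁³ p₂ + a₂ p₁² p₂² + a₃ p₁ p₂³ + a₄ p₂⁴. Then a₀ is Γ-periodic (and hence so are a₂ and a₄). -/
open Real Finset

/-- Partial derivative with respect to the first variable. -/
noncomputable def pdx (f : ℝ × ℝ → ℝ) : ℝ × ℝ → ℝ :=
  fun p => deriv (fun s => f (s, p.2)) p.1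

/-- Partial derivative with respect to the second variable. -/
noncomputable def pdy (f : ℝ × ℝ → ℝ) : ℝ × ℝ → ℝ :=
  fun p => deriv (fun s => f (p.1, s)) p.2

/-- Partial derivative of a function on phase space `T*ℝ²` w.r.t. `x`. -/
noncomputable def pq1 (G : (ℝ × ℝ) × ℝ × ℝ → ℝ) : (ℝ × ℝ) × ℝ × ℝ → ℝ :=
  fun z => deriv (fun s => G ((s, z.1.2), z.2)) z.1.1

/-- Partial derivative of a function on phase space `T*ℝ²` w.r.t. `y`. -/
noncomputable def pq2 (G : (ℝ × ℝ) × ℝ × ℝ → ℝ) : (ℝ × ℝ) × ℝ × ℝ → ℝ :=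
  fun z => deriv (fun s => G ((z.1.1, s), z.2)) z.1.2

/-- Partial derivative of a function on phase space `T*ℝ²` w.r.t. `p₁`. -/
noncomputable def pp1 (G : (ℝ × ℝ) × ℝ × ℝ → ℝ) : (ℝ × ℝ) × ℝ × ℝ → ℝ :=
  fun z => deriv (fun s => G (z.1, (s, z.2.2))) z.2.1

/-- Partial derivative of a function on phase space `T*ℝ²` w.r.t. `p₂`. -/
noncomputable def pp2 (G : (ℝ × ℝ) × ℝ × ℝ → ℝ) : (ℝ × ℝ) × ℝ × ℝ → ℝ :=
  fun z => deriv (fun s => G (z.1, (z.2.1, s))) z.2.2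

/-- The Poisson bracket `{G, K}` on `T*ℝ²`. -/
noncomputable def poisson (G K : (ℝ × ℝ) × ℝ × ℝ → ℝ) : (ℝ × ℝ) × ℝ × ℝ → ℝ :=
  fun z => pq1 K z * pp1 G z - pp1 K z * pq1 G z + pq2 K z * pp2 G z - pp2 K z * pq2 G z

/-- A function is periodic with respect to the lattice generated by `v` and `w`. -/
def LatticePeriodic (v w : ℝ × ℝ) (u : ℝ × ℝ → ℝ) : Prop :=
  ∀ z, u (z + v) = u z ∧ u (z + w) = u z

namespace PD


variable {g : ℝ × ℝ → ℝ}

lemma hasDerivAt_px (hg : ContDiff ℝ (⊤ : ℕ∞) g) (z : ℝ × ℝ) :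
    HasDerivAt (fun s => g (s, z.2)) (fderiv ℝ g z ((1:ℝ), (0:ℝ))) z.1 := by
  have h1 : HasDerivAt (fun s : ℝ => (s, z.2)) ((1:ℝ), (0:ℝ)) z.1 :=
    (hasDerivAt_id z.1).prodMk (hasDerivAt_const z.1 z.2)
  have h2 : HasFDerivAt g (fderiv ℝ g z) ((fun s : ℝ => (s, z.2)) z.1) := by
    simpa using (hg.differentiable (by simp) z).hasFDerivAt
  exact h2.comp_hasDerivAt z.1 h1

lemma hasDerivAt_py (hg : ContDiff ℝ (⊤ : ℕ∞) g) (z : ℝ × ℝ) :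
    HasDerivAt (fun t => g (z.1, t)) (fderiv ℝ g z ((0:ℝ), (1:ℝ))) z.2 := by
  have h1 : HasDerivAt (fun t : ℝ => (z.1, t)) ((0:ℝ), (1:ℝ)) z.2 :=
    (hasDerivAt_const z.2 z.1).prodMk (hasDerivAt_id z.2)
  have h2 : HasFDerivAt g (fderiv ℝ g z) ((fun t : ℝ => (z.1, t)) z.2) := by
    simpa using (hg.differentiable (by simp) z).hasFDerivAt
  exact h2.comp_hasDerivAt z.2 h1

lemma pdx_eq_fderiv (hg : ContDiff ℝ (⊤ : ℕ∞) g) (z : ℝ × ℝ) :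
    pdx g z = fderiv ℝ g z ((1:ℝ), (0:ℝ)) :=
  (hasDerivAt_px hg z).deriv

lemma pdy_eq_fderiv (hg : ContDiff ℝ (⊤ : ℕ∞) g) (z : ℝ × ℝ) :
    pdy g z = fderiv ℝ g z ((0:ℝ), (1:ℝ)) :=
  (hasDerivAt_py hg z).deriv

lemma hasDerivAt_pdx (hg : ContDiff ℝ (⊤ : ℕ∞) g) (z : ℝ × ℝ) :
    HasDerivAt (fun s => g (s, z.2)) (pdx g z) z.1 := by
  rw [pdx_eq_fderiv hg]; exact hasDerivAt_px hg z

lemma hasDerivAt_pdy (hg : ContDiff ℝ (⊤ : ℕ∞) g) (z : ℝ × ℝ) :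
    HasDerivAt (fun t => g (z.1, t)) (pdy g z) z.2 := by
  rw [pdy_eq_fderiv hg]; exact hasDerivAt_py hg z

lemma contDiff_pdx (hg : ContDiff ℝ (⊤ : ℕ∞) g) : ContDiff ℝ (⊤ : ℕ∞) (pdx g) := by
  have h : pdx g = fun z => fderiv ℝ g z ((1:ℝ), (0:ℝ)) := funext fun z => pdx_eq_fderiv hg z
  rw [h]
  exact (hg.fderiv_right (by simp)).clm_apply contDiff_const

lemma contDiff_pdy (hg : ContDiff ℝ (⊤ : ℕ∞) g) : ContDiff ℝ (⊤ : ℕ∞) (pdy g) := by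
  have h : pdy g = fun z => fderiv ℝ g z ((0:ℝ), (1:ℝ)) := funext fun z => pdy_eq_fderiv hg z
  rw [h]
  exact (hg.fderiv_right (by simp)).clm_apply contDiff_const

lemma pdx_shift {v : ℝ × ℝ} (hg : ContDiff ℝ (⊤ : ℕ∞) g) (hp : ∀ z, g (z + v) = g z) (z : ℝ × ℝ) :
    pdx g (z + v) = pdx g z := by
  have hfun : (fun s => g (s, (z + v).2)) = fun s => g (s - v.1, z.2) := by
    funext s
    have h := hp (s - v.1, z.2)
    calc g (s, (z + v).2) = g ((s - v.1, z.2) + v) := by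
          congr 1
          apply Prod.ext <;> simp
      _ = g (s - v.1, z.2) := h
  have inner : HasDerivAt (fun s : ℝ => s - v.1) 1 (z.1 + v.1) := (hasDerivAt_id _).sub_const v.1
  have houter := hasDerivAt_pdx hg z
  have hpt : z.1 + v.1 - v.1 = z.1 := by ring
  have H2' : HasDerivAt (fun s => g (s - v.1, z.2)) (pdx g z * 1) (z.1 + v.1) := by
    have hh : HasDerivAt (fun r => g (r, z.2)) (pdx g z) (z.1 + v.1 - v.1) := by
      rw [hpt]; exact houter
    exact hh.comp (z.1 + v.1) inner
  have H2 : HasDerivAt (fun s => g (s, (z + v).2)) (pdx g z) ((z + v).1) := by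
    rw [hfun]
    simpa using H2'
  exact H2.deriv

lemma pdy_shift {v : ℝ × ℝ} (hg : ContDiff ℝ (⊤ : ℕ∞) g) (hp : ∀ z, g (z + v) = g z) (z : ℝ × ℝ) :
    pdy g (z + v) = pdy g z := by
  have hfun : (fun t => g ((z + v).1, t)) = fun t => g (z.1, t - v.2) := by
    funext t
    have h := hp (z.1, t - v.2)
    calc g ((z + v).1, t) = g ((z.1, t - v.2) + v) := by
          congr 1
          apply Prod.ext <;> simp
      _ = g (z.1, t - v.2) := h
  have inner : HasDerivAt (fun t : ℝ => t - v.2) 1 (z.2 + v.2) := (hasDerivAt_id _).sub_const v.2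
  have houter := hasDerivAt_pdy hg z
  have hpt : z.2 + v.2 - v.2 = z.2 := by ring
  have H2' : HasDerivAt (fun t => g (z.1, t - v.2)) (pdy g z * 1) (z.2 + v.2) := by
    have hh : HasDerivAt (fun r => g (z.1, r)) (pdy g z) (z.2 + v.2 - v.2) := by
      rw [hpt]; exact houter
    exact hh.comp (z.2 + v.2) inner
  have H2 : HasDerivAt (fun t => g ((z + v).1, t)) (pdy g z) ((z + v).2) := by
    rw [hfun]
    simpa using H2'
  exact H2.deriv

lemma pdx_pdy_comm (hg : ContDiff ℝ (⊤ : ℕ∞) g) (z : ℝ × ℝ) :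
    pdx (pdy g) z = pdy (pdx g) z := by
  have hd : Differentiable ℝ g := hg.differentiable (by simp)
  have hF : ContDiff ℝ (⊤ : ℕ∞) (fderiv ℝ g) := hg.fderiv_right (by simp)
  have hdF : DifferentiableAt ℝ (fderiv ℝ g) z := hF.differentiable (by simp) z
  have key : ∀ (c q : ℝ × ℝ), fderiv ℝ (fun z => fderiv ℝ g z c) z q
      = fderiv ℝ (fderiv ℝ g) z q c := by
    intro c q
    have h : HasFDerivAt (fun z => fderiv ℝ g z c)
        ((ContinuousLinearMap.apply ℝ ℝ c).comp (fderiv ℝ (fderiv ℝ g) z)) z :=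
      (ContinuousLinearMap.apply ℝ ℝ c).hasFDerivAt.comp z hdF.hasFDerivAt
    rw [h.fderiv]; rfl
  have e1 : pdy g = fun z => fderiv ℝ g z ((0:ℝ), (1:ℝ)) := funext fun z => pdy_eq_fderiv hg z
  have e2 : pdx g = fun z => fderiv ℝ g z ((1:ℝ), (0:ℝ)) := funext fun z => pdx_eq_fderiv hg z
  have c1 : ContDiff ℝ (⊤ : ℕ∞) fun z => fderiv ℝ g z ((0:ℝ), (1:ℝ)) := hF.clm_apply contDiff_const
  have c2 : ContDiff ℝ (⊤ : ℕ∞) fun z => fderiv ℝ g z ((1:ℝ), (0:ℝ)) := hF.clm_apply contDiff_const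
  rw [e1, e2, pdx_eq_fderiv c1 z, pdy_eq_fderiv c2 z, key, key]
  exact second_derivative_symmetric (fun y => (hd y).hasFDerivAt) hdF.hasFDerivAt _ _

end PD
namespace PD

open MeasureTheory

lemma integrable_continuous (F : ℝ × ℝ → ℝ) (hF : Continuous F) :
    Integrable F ((volume.restrict (Set.Ioc (0:ℝ) 1)).prod (volume.restrict (Set.Ioc (0:ℝ) 1))) := by
  rw [Measure.prod_restrict, ← Measure.volume_eq_prod]
  exact ((hF.continuousOn).integrableOn_compact (isCompact_Icc.prod isCompact_Icc)).mono_set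
    (Set.prod_mono Set.Ioc_subset_Icc_self Set.Ioc_subset_Icc_self)

lemma contF (G : ℝ × ℝ → ℝ) (hG : ContDiff ℝ (⊤ : ℕ∞) G) (r v w : ℝ × ℝ) :
    Continuous fun p : ℝ × ℝ => fderiv ℝ G (p.1 • w + p.2 • v) r := by
  have hfc : Continuous fun z : ℝ × ℝ => fderiv ℝ G z := (hG.fderiv_right (m := (⊤ : ℕ∞)) (by simp)).continuous
  have hφ : Continuous fun p : ℝ × ℝ => p.1 • w + p.2 • v := by continuity
  exact (ContinuousLinearMap.apply ℝ ℝ r).continuous.comp (hfc.comp hφ)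

lemma ftc_line (G : ℝ × ℝ → ℝ) (hG : ContDiff ℝ (⊤ : ℕ∞) G) (c r : ℝ × ℝ) :
    ∫ t in (0:ℝ)..1, fderiv ℝ G (c + t • r) r = G (c + r) - G c := by
  have hder : ∀ t : ℝ, HasDerivAt (fun t : ℝ => G (c + t • r)) (fderiv ℝ G (c + t • r) r) t := by
    intro t
    have h1 : HasDerivAt (fun t : ℝ => c + t • r) r t := by
      simpa using ((hasDerivAt_id t).smul_const r).const_add c
    have := ((hG.differentiable (by simp) (c + t • r)).hasFDerivAt).comp_hasDerivAt t h1
    exact this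
  have hcont : Continuous fun t : ℝ => fderiv ℝ G (c + t • r) r := by
    have h2 : Continuous fun z : ℝ × ℝ => fderiv ℝ G z r :=
      (ContinuousLinearMap.apply ℝ ℝ r).continuous.comp (hG.fderiv_right (m := (⊤ : ℕ∞)) (by simp)).continuous
    exact h2.comp (by continuity)
  have := intervalIntegral.integral_eq_sub_of_hasDerivAt (f := fun t : ℝ => G (c + t • r))
    (f' := fun t : ℝ => fderiv ℝ G (c + t • r) r) (a := 0) (b := 1)
    (fun t _ => hder t) (hcont.intervalIntegrable 0 1)
  simpa using this

lemma key_int_zero (v w : ℝ × ℝ) (G : ℝ × ℝ → ℝ) (hG : ContDiff ℝ (⊤ : ℕ∞) G)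
    (hGv : ∀ z, G (z + v) = G z) (hGw : ∀ z, G (z + w) = G z)
    (q : ℝ × ℝ) (α β : ℝ) (hq : q = α • v + β • w) :
    ∫ p : ℝ × ℝ, fderiv ℝ G (p.1 • w + p.2 • v) q
      ∂((volume.restrict (Set.Ioc (0:ℝ) 1)).prod (volume.restrict (Set.Ioc (0:ℝ) 1))) = 0 := by
  have hsplit : ∀ z : ℝ × ℝ, fderiv ℝ G z q
      = α * fderiv ℝ G z v + β * fderiv ℝ G z w := by
    intro z; rw [hq]; simp [smul_eq_mul]
  have hIv : ∫ p : ℝ × ℝ, fderiv ℝ G (p.1 • w + p.2 • v) v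
      ∂((volume.restrict (Set.Ioc (0:ℝ) 1)).prod (volume.restrict (Set.Ioc (0:ℝ) 1))) = 0 := by
    rw [MeasureTheory.integral_prod _ (integrable_continuous _ (contF G hG v v w))]
    have inner : ∀ s : ℝ,
        (∫ t, fderiv ℝ G (s • w + t • v) v ∂(volume.restrict (Set.Ioc (0:ℝ) 1))) = 0 := by
      intro s
      calc (∫ t, fderiv ℝ G (s • w + t • v) v ∂(volume.restrict (Set.Ioc (0:ℝ) 1)))
          = ∫ t in (0:ℝ)..1, fderiv ℝ G (s • w + t • v) v :=
            (intervalIntegral.integral_of_le zero_le_one).symm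
        _ = G (s • w + v) - G (s • w) := ftc_line G hG (s • w) v
        _ = 0 := by rw [hGv]; ring
    simp only [inner, integral_zero]
  have hIw : ∫ p : ℝ × ℝ, fderiv ℝ G (p.1 • w + p.2 • v) w
      ∂((volume.restrict (Set.Ioc (0:ℝ) 1)).prod (volume.restrict (Set.Ioc (0:ℝ) 1))) = 0 := by
    rw [MeasureTheory.integral_prod_symm _ (integrable_continuous _ (contF G hG w v w))]
    have inner : ∀ t : ℝ,
        (∫ s, fderiv ℝ G (s • w + t • v) w ∂(volume.restrict (Set.Ioc (0:ℝ) 1))) = 0 := by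
      intro t
      have hcomm : ∀ s : ℝ, s • w + t • v = t • v + s • w := fun s => add_comm _ _
      calc (∫ s, fderiv ℝ G (s • w + t • v) w ∂(volume.restrict (Set.Ioc (0:ℝ) 1)))
          = ∫ s in (0:ℝ)..1, fderiv ℝ G (t • v + s • w) w := by
            rw [intervalIntegral.integral_of_le zero_le_one]
            simp only [hcomm]
        _ = G (t • v + w) - G (t • v) := ftc_line G hG (t • v) w
        _ = 0 := by rw [hGw]; ring
    simp only [inner, integral_zero]
  calc (∫ p : ℝ × ℝ, fderiv ℝ G (p.1 • w + p.2 • v) q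
      ∂((volume.restrict (Set.Ioc (0:ℝ) 1)).prod (volume.restrict (Set.Ioc (0:ℝ) 1))))
      = ∫ p : ℝ × ℝ, (α * fderiv ℝ G (p.1 • w + p.2 • v) v
          + β * fderiv ℝ G (p.1 • w + p.2 • v) w)
        ∂((volume.restrict (Set.Ioc (0:ℝ) 1)).prod (volume.restrict (Set.Ioc (0:ℝ) 1))) := by
        simp only [hsplit]
    _ = α * (∫ p : ℝ × ℝ, fderiv ℝ G (p.1 • w + p.2 • v) v
          ∂((volume.restrict (Set.Ioc (0:ℝ) 1)).prod (volume.restrict (Set.Ioc (0:ℝ) 1))))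
        + β * (∫ p : ℝ × ℝ, fderiv ℝ G (p.1 • w + p.2 • v) w
          ∂((volume.restrict (Set.Ioc (0:ℝ) 1)).prod (volume.restrict (Set.Ioc (0:ℝ) 1)))) := by
        rw [MeasureTheory.integral_add ((integrable_continuous _ (contF G hG v v w)).const_mul α)
          ((integrable_continuous _ (contF G hG w v w)).const_mul β),
          MeasureTheory.integral_const_mul, MeasureTheory.integral_const_mul]
    _ = 0 := by rw [hIv, hIw]; ring

end PD
namespace PD

open MeasureTheory

lemma u_periodic (v w : ℝ × ℝ)
    (hco : ∀ x : ℝ × ℝ, ∃ α β : ℝ, x = α • v + β • w)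
    (u A B C E : ℝ × ℝ → ℝ)
    (hu : ContDiff ℝ (⊤ : ℕ∞) u) (hA : ContDiff ℝ (⊤ : ℕ∞) A) (hB : ContDiff ℝ (⊤ : ℕ∞) B)
    (hC : ContDiff ℝ (⊤ : ℕ∞) C) (hE : ContDiff ℝ (⊤ : ℕ∞) E)
    (hAv : ∀ z, A (z + v) = A z) (hAw : ∀ z, A (z + w) = A z)
    (hBv : ∀ z, B (z + v) = B z) (hBw : ∀ z, B (z + w) = B z)
    (hCpv : ∀ z, C (z + v) = C z) (hCpw : ∀ z, C (z + w) = C z)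
    (hEv : ∀ z, E (z + v) = E z) (hEw : ∀ z, E (z + w) = E z)
    (hux : ∀ z, fderiv ℝ u z ((1:ℝ), (0:ℝ))
      = fderiv ℝ A z ((1:ℝ), (0:ℝ)) + fderiv ℝ B z ((0:ℝ), (1:ℝ)))
    (huy : ∀ z, fderiv ℝ u z ((0:ℝ), (1:ℝ))
      = fderiv ℝ C z ((1:ℝ), (0:ℝ)) + fderiv ℝ E z ((0:ℝ), (1:ℝ))) :
    ∀ z, u (z + v) = u z := by
  have fshift : ∀ (G : ℝ × ℝ → ℝ), ContDiff ℝ (⊤ : ℕ∞) G → ∀ (p : ℝ × ℝ), (∀ z, G (z + p) = G z) →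
      ∀ z, fderiv ℝ G (z + p) = fderiv ℝ G z := by
    intro G hG p hp z
    have h1 : HasFDerivAt (fun y => G (y + p)) (fderiv ℝ G (z + p)) z := by
      have := ((hG.differentiable (by simp) (z + p)).hasFDerivAt).comp z
        ((hasFDerivAt_id z).add_const p)
      exact this
    rw [funext hp] at h1
    exact h1.fderiv.symm
  have ext2 : ∀ (T S : (ℝ × ℝ) →L[ℝ] ℝ), T ((1:ℝ), (0:ℝ)) = S ((1:ℝ), (0:ℝ)) →
      T ((0:ℝ), (1:ℝ)) = S ((0:ℝ), (1:ℝ)) → T = S := by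
    intro T S h1 h2
    apply ContinuousLinearMap.ext
    intro x
    have hx : (x : ℝ × ℝ) = x.1 • ((1:ℝ), (0:ℝ)) + x.2 • ((0:ℝ), (1:ℝ)) := by
      apply Prod.ext <;> simp
    rw [hx, map_add, map_add]
    simp only [ContinuousLinearMap.map_smul, h1, h2]
  have fup : ∀ z, fderiv ℝ u (z + v) = fderiv ℝ u z := by
    intro z
    apply ext2
    · rw [hux, hux, fshift A hA v hAv z, fshift B hB v hBv z]
    · rw [huy, huy, fshift C hC v hCpv z, fshift E hE v hEv z]
  set g : ℝ × ℝ → ℝ := fun z => u (z + v) - u z with hg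
  have hgd : Differentiable ℝ g :=
    ((hu.differentiable (by simp)).comp (differentiable_id.add_const v)).sub
      (hu.differentiable (by simp))
  have hg0 : ∀ z, fderiv ℝ g z = 0 := by
    intro z
    have h1 : HasFDerivAt (fun y => u (y + v)) (fderiv ℝ u (z + v)) z := by
      have := ((hu.differentiable (by simp) (z + v)).hasFDerivAt).comp z
        ((hasFDerivAt_id z).add_const v)
      exact this
    have h2 := (hu.differentiable (by simp) z).hasFDerivAt
    have h3 := (h1.sub h2).fderiv
    rw [hg, show (fun z => u (z + v) - u z) = (fun y => u (y + v)) - u from rfl, h3, fup z]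
    simp
  have hconst : ∀ x y : ℝ × ℝ, g x = g y := is_const_of_fderiv_eq_zero hgd hg0
  -- the constant is the double integral of the directional derivative
  have hI0 : ∫ p : ℝ × ℝ, fderiv ℝ u (p.1 • w + p.2 • v) v
      ∂((volume.restrict (Set.Ioc (0:ℝ) 1)).prod (volume.restrict (Set.Ioc (0:ℝ) 1))) = 0 := by
    obtain ⟨α, β, he1⟩ := hco ((1:ℝ), (0:ℝ))
    obtain ⟨γ, δ, he2⟩ := hco ((0:ℝ), (1:ℝ))
    have iA := key_int_zero v w A hA hAv hAw _ α β he1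
    have iB := key_int_zero v w B hB hBv hBw _ γ δ he2
    have iC := key_int_zero v w C hC hCpv hCpw _ α β he1
    have iE := key_int_zero v w E hE hEv hEw _ γ δ he2
    have hsplit : ∀ z : ℝ × ℝ, fderiv ℝ u z v
        = v.1 * (fderiv ℝ A z ((1:ℝ), (0:ℝ)) + fderiv ℝ B z ((0:ℝ), (1:ℝ)))
          + v.2 * (fderiv ℝ C z ((1:ℝ), (0:ℝ)) + fderiv ℝ E z ((0:ℝ), (1:ℝ))) := by
      intro z
      have hv : (v : ℝ × ℝ) = v.1 • ((1:ℝ), (0:ℝ)) + v.2 • ((0:ℝ), (1:ℝ)) := by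
        apply Prod.ext <;> simp
      conv_lhs => rw [hv]
      rw [map_add]
      simp only [ContinuousLinearMap.map_smul, smul_eq_mul, hux z, huy z]
    have c1 := contF A hA ((1:ℝ), (0:ℝ)) v w
    have c2 := contF B hB ((0:ℝ), (1:ℝ)) v w
    have c3 := contF C hC ((1:ℝ), (0:ℝ)) v w
    have c4 := contF E hE ((0:ℝ), (1:ℝ)) v w
    calc (∫ p : ℝ × ℝ, fderiv ℝ u (p.1 • w + p.2 • v) v
        ∂((volume.restrict (Set.Ioc (0:ℝ) 1)).prod (volume.restrict (Set.Ioc (0:ℝ) 1))))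
        = ∫ p : ℝ × ℝ,
            (v.1 * (fderiv ℝ A (p.1 • w + p.2 • v) ((1:ℝ), (0:ℝ))
                + fderiv ℝ B (p.1 • w + p.2 • v) ((0:ℝ), (1:ℝ)))
              + v.2 * (fderiv ℝ C (p.1 • w + p.2 • v) ((1:ℝ), (0:ℝ))
                + fderiv ℝ E (p.1 • w + p.2 • v) ((0:ℝ), (1:ℝ))))
          ∂((volume.restrict (Set.Ioc (0:ℝ) 1)).prod (volume.restrict (Set.Ioc (0:ℝ) 1))) := by
          simp only [hsplit]
      _ = 0 := by
          have I1 : Integrable (fun p : ℝ × ℝ =>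
              v.1 * (fderiv ℝ A (p.1 • w + p.2 • v) ((1:ℝ), (0:ℝ))
                + fderiv ℝ B (p.1 • w + p.2 • v) ((0:ℝ), (1:ℝ))))
              ((volume.restrict (Set.Ioc (0:ℝ) 1)).prod (volume.restrict (Set.Ioc (0:ℝ) 1))) :=
            ((integrable_continuous _ c1).add (integrable_continuous _ c2)).const_mul v.1
          have I2 : Integrable (fun p : ℝ × ℝ =>
              v.2 * (fderiv ℝ C (p.1 • w + p.2 • v) ((1:ℝ), (0:ℝ))
                + fderiv ℝ E (p.1 • w + p.2 • v) ((0:ℝ), (1:ℝ))))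
              ((volume.restrict (Set.Ioc (0:ℝ) 1)).prod (volume.restrict (Set.Ioc (0:ℝ) 1))) :=
            ((integrable_continuous _ c3).add (integrable_continuous _ c4)).const_mul v.2
          have I3 : Integrable (fun p : ℝ × ℝ =>
              fderiv ℝ A (p.1 • w + p.2 • v) ((1:ℝ), (0:ℝ))
                + fderiv ℝ B (p.1 • w + p.2 • v) ((0:ℝ), (1:ℝ)))
              ((volume.restrict (Set.Ioc (0:ℝ) 1)).prod (volume.restrict (Set.Ioc (0:ℝ) 1))) :=
            (integrable_continuous _ c1).add (integrable_continuous _ c2)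
          have I4 : Integrable (fun p : ℝ × ℝ =>
              fderiv ℝ C (p.1 • w + p.2 • v) ((1:ℝ), (0:ℝ))
                + fderiv ℝ E (p.1 • w + p.2 • v) ((0:ℝ), (1:ℝ)))
              ((volume.restrict (Set.Ioc (0:ℝ) 1)).prod (volume.restrict (Set.Ioc (0:ℝ) 1))) :=
            (integrable_continuous _ c3).add (integrable_continuous _ c4)
          rw [MeasureTheory.integral_add I1 I2, MeasureTheory.integral_const_mul,
            MeasureTheory.integral_const_mul, MeasureTheory.integral_add
              (integrable_continuous _ c1) (integrable_continuous _ c2),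
            MeasureTheory.integral_add (integrable_continuous _ c3) (integrable_continuous _ c4),
            iA, iB, iC, iE]
          ring
  have hCv : g 0 = 0 := by
    have hint := integrable_continuous _ (contF u hu v v w)
    rw [MeasureTheory.integral_prod _ hint] at hI0
    have inner : ∀ s : ℝ,
        (∫ t, fderiv ℝ u (s • w + t • v) v ∂(volume.restrict (Set.Ioc (0:ℝ) 1))) = g 0 := by
      intro s
      calc (∫ t, fderiv ℝ u (s • w + t • v) v ∂(volume.restrict (Set.Ioc (0:ℝ) 1)))
          = ∫ t in (0:ℝ)..1, fderiv ℝ u (s • w + t • v) v :=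
            (intervalIntegral.integral_of_le zero_le_one).symm
        _ = u (s • w + v) - u (s • w) := ftc_line u hu (s • w) v
        _ = g 0 := hconst (s • w) 0
    rw [show (fun s : ℝ => ∫ t, fderiv ℝ u (s • w + t • v) v
        ∂(volume.restrict (Set.Ioc (0:ℝ) 1))) = fun _ : ℝ => g 0 from funext inner] at hI0
    rw [MeasureTheory.integral_const] at hI0
    have hμ : (volume.restrict (Set.Ioc (0:ℝ) 1)) Set.univ = 1 := by
      rw [Measure.restrict_apply_univ, Real.volume_Ioc]
      norm_num
    rw [measureReal_def, hμ] at hI0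
    simpa using hI0
  intro z
  have := hconst z 0
  rw [hCv] at this
  have : u (z + v) - u z = 0 := this
  linarith
end PD

theorem periodic_solution_gives_periodic_data_quartic
    (v w : ℝ × ℝ) (hvw : LinearIndependent ℝ ![v, w])
    (c₂ : ℝ) (hc₂ : c₂ ≠ 0) (a₁₁ a₁₂ a₂₂ : ℝ)
    (lam : ℝ × ℝ → ℝ) (hlam : ContDiff ℝ (⊤ : ℕ∞) lam) (hper : LatticePeriodic v w lam)
    (heq : ∀ z, pdy (pdx lam) z * (pdy (pdy (pdy (pdy lam))) z - pdx (pdx (pdx (pdx lam))) z)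
      + 3 * (pdy (pdy (pdy lam)) z * pdy (pdy (pdx lam)) z
        - pdy (pdx (pdx lam)) z * pdx (pdx (pdx lam)) z)
      + 2 * (pdy (pdy lam) z * pdy (pdy (pdy (pdx lam))) z
        - pdx (pdx lam) z * pdy (pdx (pdx (pdx lam))) z)
      + 4 * a₂₂ * pdy (pdy (pdy (pdx lam))) z
      - 4 * a₁₁ * pdy (pdx (pdx (pdx lam))) z
      + 2 * a₁₂ * (pdy (pdy (pdy (pdy lam))) z - pdx (pdx (pdx (pdx lam))) z) = 0)
    (hpos : ∀ z, 0 < pdx (pdx lam) z + pdy (pdy lam) z + 2 * (a₁₁ + a₂₂))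
    (f : ℝ × ℝ → ℝ)
    (hf : f = fun z => lam z + a₁₁ * z.1 ^ 2 + 2 * a₁₂ * z.1 * z.2 + a₂₂ * z.2 ^ 2)
    (Λ a₀ a₁ a₂ a₃ a₄ : ℝ × ℝ → ℝ)
    (hΛ : Λ = fun z => (pdx (pdx f) z + pdy (pdy f) z) / (2 * c₂))
    (ha₁ : a₁ = fun z => 2 * c₂ * pdy (pdx f) z / (pdx (pdx f) z + pdy (pdy f) z))
    (ha₀smooth : ContDiff ℝ (⊤ : ℕ∞) a₀)
    (ha₀x : ∀ z, pdx a₀ z =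
      -(1 / (pdx (pdx f) z + pdy (pdy f) z) ^ 2) *
        (c₂ * pdy (pdy (pdy f)) z * pdy (pdx f) z
          + c₂ * pdy (pdx f) z * pdy (pdx (pdx f)) z
          + 2 * a₀ z * (pdx (pdx f) z + pdy (pdy f) z) *
            (pdx (pdx (pdx f)) z + pdy (pdy (pdx f)) z)))
    (ha₀y : ∀ z, pdy a₀ z =
      (1 / (pdx (pdx f) z + pdy (pdy f) z) ^ 2) *
        (2 * pdy (pdy f) z * ((c₂ - a₀ z) * pdy (pdy (pdy f)) z - a₀ z * pdy (pdx (pdx f)) z)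
          - 2 * pdx (pdx f) z * (c₂ * pdy (pdx (pdx f)) z
            + a₀ z * (pdy (pdy (pdy f)) z + pdy (pdx (pdx f)) z))
          - c₂ * pdy (pdx f) z * (pdy (pdy (pdx f)) z + pdx (pdx (pdx f)) z)))
    (ha₂ : a₂ = fun z => -(2 * c₂ * pdy (pdy f) z) / (pdx (pdx f) z + pdy (pdy f) z) + 2 * a₀ z)
    (ha₃ : a₃ = a₁)
    (ha₄ : a₄ = fun z => c₂ + a₂ z - a₀ z)
    (hHF : ∀ z, poisson
      (fun u => (u.2.1 ^ 2 + u.2.2 ^ 2) / (2 * Λ u.1))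
      (fun u => a₀ u.1 * u.2.1 ^ 4 + a₁ u.1 * u.2.1 ^ 3 * u.2.2
        + a₂ u.1 * u.2.1 ^ 2 * u.2.2 ^ 2 + a₃ u.1 * u.2.1 * u.2.2 ^ 3
        + a₄ u.1 * u.2.2 ^ 4) z = 0) :
    LatticePeriodic v w a₀ ∧ LatticePeriodic v w a₂ ∧ LatticePeriodic v w a₄ := by
  -- smoothness of f
  have hfd : ContDiff ℝ (⊤ : ℕ∞) f := by
    rw [hf]
    exact ((hlam.add (contDiff_const.mul (contDiff_fst.pow 2))).add
      ((contDiff_const.mul contDiff_fst).mul contDiff_snd)).add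
      (contDiff_const.mul (contDiff_snd.pow 2))
  -- first derivatives of f
  have hfx : ∀ z : ℝ × ℝ, pdx f z = pdx lam z + (2 * a₁₁ * z.1 + 2 * a₁₂ * z.2) := by
    intro z
    have h1 := PD.hasDerivAt_pdx hlam z
    have h2 : HasDerivAt (fun s : ℝ => a₁₁ * s ^ 2) (2 * a₁₁ * z.1) z.1 := by
      have := (hasDerivAt_pow 2 z.1).const_mul a₁₁
      refine this.congr_deriv ?_
      push_cast
      ring
    have h3 : HasDerivAt (fun s : ℝ => 2 * a₁₂ * s * z.2) (2 * a₁₂ * z.2) z.1 := by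
      have := ((hasDerivAt_id z.1).const_mul (2 * a₁₂)).mul_const z.2
      refine this.congr_deriv ?_
      ring
    have h4 : HasDerivAt (fun _ : ℝ => a₂₂ * z.2 ^ 2) 0 z.1 := hasDerivAt_const _ _
    have H := ((h1.add h2).add h3).add h4
    have H' : HasDerivAt
        (fun s => lam (s, z.2) + a₁₁ * s ^ 2 + 2 * a₁₂ * s * z.2 + a₂₂ * z.2 ^ 2)
        (pdx lam z + (2 * a₁₁ * z.1 + 2 * a₁₂ * z.2)) z.1 := by
      refine H.congr_deriv ?_
      ring
    rw [hf]
    exact H'.deriv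
  have hfy : ∀ z : ℝ × ℝ, pdy f z = pdy lam z + (2 * a₁₂ * z.1 + 2 * a₂₂ * z.2) := by
    intro z
    have h1 := PD.hasDerivAt_pdy hlam z
    have h2 : HasDerivAt (fun _ : ℝ => a₁₁ * z.1 ^ 2) 0 z.2 := hasDerivAt_const _ _
    have h3 : HasDerivAt (fun t : ℝ => 2 * a₁₂ * z.1 * t) (2 * a₁₂ * z.1) z.2 := by
      have := (hasDerivAt_id z.2).const_mul (2 * a₁₂ * z.1)
      refine this.congr_deriv ?_
      ring
    have h4 : HasDerivAt (fun t : ℝ => a₂₂ * t ^ 2) (2 * a₂₂ * z.2) z.2 := by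
      have := (hasDerivAt_pow 2 z.2).const_mul a₂₂
      refine this.congr_deriv ?_
      push_cast
      ring
    have H := ((h1.add h2).add h3).add h4
    have H' : HasDerivAt
        (fun t => lam (z.1, t) + a₁₁ * z.1 ^ 2 + 2 * a₁₂ * z.1 * t + a₂₂ * t ^ 2)
        (pdy lam z + (2 * a₁₂ * z.1 + 2 * a₂₂ * z.2)) z.2 := by
      refine H.congr_deriv ?_
      ring
    rw [hf]
    exact H'.deriv
  have hfx' : pdx f = fun z => pdx lam z + (2 * a₁₁ * z.1 + 2 * a₁₂ * z.2) := funext hfx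
  have hfy' : pdy f = fun z => pdy lam z + (2 * a₁₂ * z.1 + 2 * a₂₂ * z.2) := funext hfy
  -- second derivatives of f
  have hfxx : ∀ z : ℝ × ℝ, pdx (pdx f) z = pdx (pdx lam) z + 2 * a₁₁ := by
    intro z
    rw [hfx']
    have h1 := PD.hasDerivAt_pdx (PD.contDiff_pdx hlam) z
    have h2 : HasDerivAt (fun s : ℝ => 2 * a₁₁ * s + 2 * a₁₂ * z.2) (2 * a₁₁) z.1 := by
      have := ((hasDerivAt_id z.1).const_mul (2 * a₁₁)).add_const (2 * a₁₂ * z.2)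
      refine this.congr_deriv ?_
      ring
    exact (h1.add h2).deriv
  have hfxy : ∀ z : ℝ × ℝ, pdy (pdx f) z = pdy (pdx lam) z + 2 * a₁₂ := by
    intro z
    rw [hfx']
    have h1 := PD.hasDerivAt_pdy (PD.contDiff_pdx hlam) z
    have h2 : HasDerivAt (fun t : ℝ => 2 * a₁₁ * z.1 + 2 * a₁₂ * t) (2 * a₁₂) z.2 := by
      have := ((hasDerivAt_id z.2).const_mul (2 * a₁₂)).const_add (2 * a₁₁ * z.1)
      refine this.congr_deriv ?_
      ring
    exact (h1.add h2).deriv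
  have hfyy : ∀ z : ℝ × ℝ, pdy (pdy f) z = pdy (pdy lam) z + 2 * a₂₂ := by
    intro z
    rw [hfy']
    have h1 := PD.hasDerivAt_pdy (PD.contDiff_pdy hlam) z
    have h2 : HasDerivAt (fun t : ℝ => 2 * a₁₂ * z.1 + 2 * a₂₂ * t) (2 * a₂₂) z.2 := by
      have := ((hasDerivAt_id z.2).const_mul (2 * a₂₂)).const_add (2 * a₁₂ * z.1)
      refine this.congr_deriv ?_
      ring
    exact (h1.add h2).deriv
  -- periodicity of second derivatives
  have hlv : ∀ z, lam (z + v) = lam z := fun z => (hper z).1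
  have hlw : ∀ z, lam (z + w) = lam z := fun z => (hper z).2
  have hxv : ∀ z, pdx lam (z + v) = pdx lam z := PD.pdx_shift hlam hlv
  have hxw : ∀ z, pdx lam (z + w) = pdx lam z := PD.pdx_shift hlam hlw
  have hyv : ∀ z, pdy lam (z + v) = pdy lam z := PD.pdy_shift hlam hlv
  have hyw : ∀ z, pdy lam (z + w) = pdy lam z := PD.pdy_shift hlam hlw
  have hxxv : ∀ z, pdx (pdx lam) (z + v) = pdx (pdx lam) z :=
    PD.pdx_shift (PD.contDiff_pdx hlam) hxv
  have hxxw : ∀ z, pdx (pdx lam) (z + w) = pdx (pdx lam) z :=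
    PD.pdx_shift (PD.contDiff_pdx hlam) hxw
  have hxyv : ∀ z, pdy (pdx lam) (z + v) = pdy (pdx lam) z :=
    PD.pdy_shift (PD.contDiff_pdx hlam) hxv
  have hxyw : ∀ z, pdy (pdx lam) (z + w) = pdy (pdx lam) z :=
    PD.pdy_shift (PD.contDiff_pdx hlam) hxw
  have hyyv : ∀ z, pdy (pdy lam) (z + v) = pdy (pdy lam) z :=
    PD.pdy_shift (PD.contDiff_pdy hlam) hyv
  have hyyw : ∀ z, pdy (pdy lam) (z + w) = pdy (pdy lam) z :=
    PD.pdy_shift (PD.contDiff_pdy hlam) hyw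
  have pD1v : ∀ z, pdx (pdx f) (z + v) = pdx (pdx f) z := by
    intro z; rw [hfxx, hfxx, hxxv]
  have pD1w : ∀ z, pdx (pdx f) (z + w) = pdx (pdx f) z := by
    intro z; rw [hfxx, hfxx, hxxw]
  have pD2v : ∀ z, pdy (pdx f) (z + v) = pdy (pdx f) z := by
    intro z; rw [hfxy, hfxy, hxyv]
  have pD2w : ∀ z, pdy (pdx f) (z + w) = pdy (pdx f) z := by
    intro z; rw [hfxy, hfxy, hxyw]
  have pD3v : ∀ z, pdy (pdy f) (z + v) = pdy (pdy f) z := by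
    intro z; rw [hfyy, hfyy, hyyv]
  have pD3w : ∀ z, pdy (pdy f) (z + w) = pdy (pdy f) z := by
    intro z; rw [hfyy, hfyy, hyyw]
  -- positivity
  have hLpos : ∀ z : ℝ × ℝ, 0 < pdx (pdx f) z + pdy (pdy f) z := by
    intro z
    rw [hfxx, hfyy]
    have := hpos z
    linarith
  have hLne : ∀ z : ℝ × ℝ, pdx (pdx f) z + pdy (pdy f) z ≠ 0 := fun z => ne_of_gt (hLpos z)
  -- Schwarz
  have hs1 : ∀ z, pdx (pdy f) z = pdy (pdx f) z := PD.pdx_pdy_comm hfd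
  have hs1' : pdx (pdy f) = pdy (pdx f) := funext hs1
  have hs2 : ∀ z, pdx (pdy (pdy f)) z = pdy (pdy (pdx f)) z := by
    intro z
    rw [PD.pdx_pdy_comm (PD.contDiff_pdy hfd) z, hs1']
  have hs3 : ∀ z, pdx (pdy (pdx f)) z = pdy (pdx (pdx f)) z :=
    PD.pdx_pdy_comm (PD.contDiff_pdx hfd)
  -- smoothness of second derivatives
  have sD1 : ContDiff ℝ (⊤ : ℕ∞) (pdx (pdx f)) := PD.contDiff_pdx (PD.contDiff_pdx hfd)
  have sD2 : ContDiff ℝ (⊤ : ℕ∞) (pdy (pdx f)) := PD.contDiff_pdy (PD.contDiff_pdx hfd)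
  have sD3 : ContDiff ℝ (⊤ : ℕ∞) (pdy (pdy f)) := PD.contDiff_pdy (PD.contDiff_pdy hfd)
  -- the function U = a₀ * (Δf)² and its partial derivatives
  set U : ℝ × ℝ → ℝ := fun z => a₀ z * (pdx (pdx f) z + pdy (pdy f) z) ^ 2 with hUdef
  have hUsm : ContDiff ℝ (⊤ : ℕ∞) U := ha₀smooth.mul ((sD1.add sD3).pow 2)
  have hUx : ∀ z, pdx U z
      = -(c₂ * pdy (pdx f) z * (pdy (pdy (pdy f)) z + pdy (pdx (pdx f)) z)) := by
    intro z
    have hL' := (PD.hasDerivAt_pdx sD1 z).add (PD.hasDerivAt_pdx sD3 z)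
    have H := (PD.hasDerivAt_pdx ha₀smooth z).mul (hL'.pow 2)
    have H' : HasDerivAt
        (fun s => a₀ (s, z.2) * (pdx (pdx f) (s, z.2) + pdy (pdy f) (s, z.2)) ^ 2)
        (-(c₂ * pdy (pdx f) z * (pdy (pdy (pdy f)) z + pdy (pdx (pdx f)) z))) z.1 := by
      refine H.congr_deriv ?_
      rw [ha₀x z, hs2 z]
      have hLz := hLne z
      push_cast
      simp only [Pi.add_apply, Pi.pow_apply]
      field_simp
      ring
    exact H'.deriv
  have hUy : ∀ z, pdy U z
      = 2 * c₂ * pdy (pdy f) z * pdy (pdy (pdy f)) z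
        - 2 * c₂ * pdx (pdx f) z * pdy (pdx (pdx f)) z
        - c₂ * pdy (pdx f) z * (pdy (pdy (pdx f)) z + pdx (pdx (pdx f)) z) := by
    intro z
    have hL' := (PD.hasDerivAt_pdy sD1 z).add (PD.hasDerivAt_pdy sD3 z)
    have H := (PD.hasDerivAt_pdy ha₀smooth z).mul (hL'.pow 2)
    have H' : HasDerivAt
        (fun t => a₀ (z.1, t) * (pdx (pdx f) (z.1, t) + pdy (pdy f) (z.1, t)) ^ 2)
        (2 * c₂ * pdy (pdy f) z * pdy (pdy (pdy f)) z
          - 2 * c₂ * pdx (pdx f) z * pdy (pdx (pdx f)) z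
          - c₂ * pdy (pdx f) z * (pdy (pdy (pdx f)) z + pdx (pdx (pdx f)) z)) z.2 := by
      refine H.congr_deriv ?_
      rw [ha₀y z]
      have hLz := hLne z
      push_cast
      simp only [Pi.add_apply, Pi.pow_apply]
      field_simp
      ring
    exact H'.deriv
  -- the four periodic potentials
  set AA : ℝ × ℝ → ℝ := fun z => c₂ / 2 * ((pdy (pdy f) z) ^ 2 - (pdy (pdx f) z) ^ 2)
    with hAAdef
  set BB : ℝ × ℝ → ℝ := fun z => -(c₂ * pdy (pdx f) z * pdy (pdy f) z) with hBBdef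
  set CC : ℝ × ℝ → ℝ := fun z => -(c₂ * pdx (pdx f) z * pdy (pdx f) z) with hCCdef
  set EE : ℝ × ℝ → ℝ := fun z =>
    c₂ * ((pdy (pdy f) z) ^ 2 - (pdx (pdx f) z) ^ 2 / 2 - (pdy (pdx f) z) ^ 2 / 2) with hEEdef
  have hAAsm : ContDiff ℝ (⊤ : ℕ∞) AA := contDiff_const.mul ((sD3.pow 2).sub (sD2.pow 2))
  have hBBsm : ContDiff ℝ (⊤ : ℕ∞) BB := ((contDiff_const.mul sD2).mul sD3).neg
  have hCCsm : ContDiff ℝ (⊤ : ℕ∞) CC := ((contDiff_const.mul sD1).mul sD2).neg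
  have hEEsm : ContDiff ℝ (⊤ : ℕ∞) EE := contDiff_const.mul
    (((sD3.pow 2).sub ((sD1.pow 2).div_const 2)).sub ((sD2.pow 2).div_const 2))
  have pdxAA : ∀ z, pdx AA z
      = c₂ * (pdy (pdy f) z * pdx (pdy (pdy f)) z - pdy (pdx f) z * pdx (pdy (pdx f)) z) := by
    intro z
    have H := (((PD.hasDerivAt_pdx sD3 z).pow 2).sub
      ((PD.hasDerivAt_pdx sD2 z).pow 2)).const_mul (c₂ / 2)
    have H' : HasDerivAt
        (fun s => c₂ / 2 * ((pdy (pdy f) (s, z.2)) ^ 2 - (pdy (pdx f) (s, z.2)) ^ 2))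
        (c₂ * (pdy (pdy f) z * pdx (pdy (pdy f)) z - pdy (pdx f) z * pdx (pdy (pdx f)) z))
        z.1 := by
      refine H.congr_deriv ?_
      push_cast
      ring
    exact H'.deriv
  have pdyBB : ∀ z, pdy BB z
      = -(c₂ * (pdy (pdy (pdx f)) z * pdy (pdy f) z
          + pdy (pdx f) z * pdy (pdy (pdy f)) z)) := by
    intro z
    have H := (((PD.hasDerivAt_pdy sD2 z).const_mul c₂).mul (PD.hasDerivAt_pdy sD3 z)).neg
    have H' : HasDerivAt
        (fun t => -(c₂ * pdy (pdx f) (z.1, t) * pdy (pdy f) (z.1, t)))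
        (-(c₂ * (pdy (pdy (pdx f)) z * pdy (pdy f) z
          + pdy (pdx f) z * pdy (pdy (pdy f)) z))) z.2 := by
      refine H.congr_deriv ?_
      ring
    exact H'.deriv
  have pdxCC : ∀ z, pdx CC z
      = -(c₂ * (pdx (pdx (pdx f)) z * pdy (pdx f) z
          + pdx (pdx f) z * pdx (pdy (pdx f)) z)) := by
    intro z
    have H := (((PD.hasDerivAt_pdx sD1 z).const_mul c₂).mul (PD.hasDerivAt_pdx sD2 z)).neg
    have H' : HasDerivAt
        (fun s => -(c₂ * pdx (pdx f) (s, z.2) * pdy (pdx f) (s, z.2)))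
        (-(c₂ * (pdx (pdx (pdx f)) z * pdy (pdx f) z
          + pdx (pdx f) z * pdx (pdy (pdx f)) z))) z.1 := by
      refine H.congr_deriv ?_
      ring
    exact H'.deriv
  have pdyEE : ∀ z, pdy EE z
      = c₂ * (2 * pdy (pdy f) z * pdy (pdy (pdy f)) z
          - pdx (pdx f) z * pdy (pdx (pdx f)) z
          - pdy (pdx f) z * pdy (pdy (pdx f)) z) := by
    intro z
    have H := ((((PD.hasDerivAt_pdy sD3 z).pow 2).sub
      (((PD.hasDerivAt_pdy sD1 z).pow 2).div_const 2)).sub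
      (((PD.hasDerivAt_pdy sD2 z).pow 2).div_const 2)).const_mul c₂
    have H' : HasDerivAt
        (fun t => c₂ * ((pdy (pdy f) (z.1, t)) ^ 2 - (pdx (pdx f) (z.1, t)) ^ 2 / 2
          - (pdy (pdx f) (z.1, t)) ^ 2 / 2))
        (c₂ * (2 * pdy (pdy f) z * pdy (pdy (pdy f)) z
          - pdx (pdx f) z * pdy (pdx (pdx f)) z
          - pdy (pdx f) z * pdy (pdy (pdx f)) z)) z.2 := by
      refine H.congr_deriv ?_
      push_cast
      ring
    exact H'.deriv
  -- gradient identities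
  have hx_eq : ∀ z, pdx U z = pdx AA z + pdy BB z := by
    intro z
    rw [hUx z, pdxAA z, pdyBB z, hs2 z, hs3 z]
    ring
  have hy_eq : ∀ z, pdy U z = pdx CC z + pdy EE z := by
    intro z
    rw [hUy z, pdxCC z, pdyEE z, hs3 z]
    ring
  -- fderiv versions
  have hux : ∀ z, fderiv ℝ U z ((1:ℝ), (0:ℝ))
      = fderiv ℝ AA z ((1:ℝ), (0:ℝ)) + fderiv ℝ BB z ((0:ℝ), (1:ℝ)) := by
    intro z
    rw [← PD.pdx_eq_fderiv hUsm, ← PD.pdx_eq_fderiv hAAsm, ← PD.pdy_eq_fderiv hBBsm]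
    exact hx_eq z
  have huy : ∀ z, fderiv ℝ U z ((0:ℝ), (1:ℝ))
      = fderiv ℝ CC z ((1:ℝ), (0:ℝ)) + fderiv ℝ EE z ((0:ℝ), (1:ℝ)) := by
    intro z
    rw [← PD.pdy_eq_fderiv hUsm, ← PD.pdx_eq_fderiv hCCsm, ← PD.pdy_eq_fderiv hEEsm]
    exact hy_eq z
  -- periodicity of the potentials
  have hAAv : ∀ z, AA (z + v) = AA z := by
    intro z; rw [hAAdef]; simp only; rw [pD3v z, pD2v z]
  have hAAw : ∀ z, AA (z + w) = AA z := by
    intro z; rw [hAAdef]; simp only; rw [pD3w z, pD2w z]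
  have hBBv : ∀ z, BB (z + v) = BB z := by
    intro z; rw [hBBdef]; simp only; rw [pD3v z, pD2v z]
  have hBBw : ∀ z, BB (z + w) = BB z := by
    intro z; rw [hBBdef]; simp only; rw [pD3w z, pD2w z]
  have hCCv : ∀ z, CC (z + v) = CC z := by
    intro z; rw [hCCdef]; simp only; rw [pD1v z, pD2v z]
  have hCCw : ∀ z, CC (z + w) = CC z := by
    intro z; rw [hCCdef]; simp only; rw [pD1w z, pD2w z]
  have hEEv : ∀ z, EE (z + v) = EE z := by
    intro z; rw [hEEdef]; simp only; rw [pD1v z, pD2v z, pD3v z]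
  have hEEw : ∀ z, EE (z + w) = EE z := by
    intro z; rw [hEEdef]; simp only; rw [pD1w z, pD2w z, pD3w z]
  -- spanning
  have hco : ∀ x : ℝ × ℝ, ∃ α β : ℝ, x = α • v + β • w := by
    have hsp : Submodule.span ℝ (Set.range ![v, w]) = ⊤ :=
      hvw.span_eq_top_of_card_eq_finrank (by simp)
    intro x
    have hx : x ∈ Submodule.span ℝ ({v, w} : Set (ℝ × ℝ)) := by
      rw [show ({v, w} : Set (ℝ × ℝ)) = Set.range ![v, w] from
        (Matrix.range_cons_cons_empty v w ![]).symm, hsp]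
      trivial
    obtain ⟨a, b, hab⟩ := Submodule.mem_span_pair.mp hx
    exact ⟨a, b, hab.symm⟩
  have hco' : ∀ x : ℝ × ℝ, ∃ α β : ℝ, x = α • w + β • v := by
    intro x
    obtain ⟨a, b, hab⟩ := hco x
    exact ⟨b, a, by rw [hab, add_comm]⟩
  -- periodicity of U
  have hUperv : ∀ z, U (z + v) = U z :=
    PD.u_periodic v w hco U AA BB CC EE hUsm hAAsm hBBsm hCCsm hEEsm
      hAAv hAAw hBBv hBBw hCCv hCCw hEEv hEEw hux huy
  have hUperw : ∀ z, U (z + w) = U z :=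
    PD.u_periodic w v hco' U AA BB CC EE hUsm hAAsm hBBsm hCCsm hEEsm
      hAAw hAAv hBBw hBBv hCCw hCCv hEEw hEEv hux huy
  -- periodicity of a₀
  have ha₀v : ∀ z, a₀ (z + v) = a₀ z := by
    intro z
    have h1 := hUperv z
    rw [hUdef] at h1
    simp only at h1
    rw [pD1v z, pD3v z] at h1
    exact mul_right_cancel₀ (pow_ne_zero 2 (hLne z)) h1
  have ha₀w : ∀ z, a₀ (z + w) = a₀ z := by
    intro z
    have h1 := hUperw z
    rw [hUdef] at h1
    simp only at h1
    rw [pD1w z, pD3w z] at h1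
    exact mul_right_cancel₀ (pow_ne_zero 2 (hLne z)) h1
  have ha₂v : ∀ z, a₂ (z + v) = a₂ z := by
    intro z
    rw [ha₂]
    simp only
    rw [pD1v z, pD3v z, ha₀v z]
  have ha₂w : ∀ z, a₂ (z + w) = a₂ z := by
    intro z
    rw [ha₂]
    simp only
    rw [pD1w z, pD3w z, ha₀w z]
  have ha₄v : ∀ z, a₄ (z + v) = a₄ z := by
    intro z
    rw [ha₄]
    simp only
    rw [ha₂v z, ha₀v z]
  have ha₄w : ∀ z, a₄ (z + w) = a₄ z := by
    intro z
    rw [ha₄]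
    simp only
    rw [ha₂w z, ha₀w z]
  exact ⟨fun z => ⟨ha₀v z, ha₀w z⟩, fun z => ⟨ha₂v z, ha₂w z⟩, fun z => ⟨ha₄v z, ha₄w z⟩⟩
end

section
/- Let a₁₁, a₁₂, a₂₂ be real constants and define the Lagrangian density L(λ) = (1/2)(4λ_xy(a₂₂ λ_yy − a₁₁ λ_xx) + 2a₁₂(λ_yy² − λ_xx²) + λ_xy(λ_yy² − λ_xx²)) for smooth λ : ℝ² → ℝ. Then for every smooth λ : ℝ² → ℝ and every smooth compactly supported φ : ℝ² → ℝ, the function t ↦ ∫_{ℝ²} (L(λ + tφ) − L(λ)) dx dy is differentiable at t = 0 with derivative equal to ∫_{ℝ²} E(λ) φ dx dy, where E(λ) = λ_xy(λ_yyyy − λ_xxxx) + 3(λ_yyy λ_xyy − λ_xxy λ_xxx) + 2(λ_yy λ_xyyy − λ_xx λ_xxxy) + 4a₂₂ λ_xyyy − 4a₁₁ λ_xxxy + 2a₁₂(λ_yyyy − λ_xxxx). In other words, the fourth-order equation E(λ) = 0 is the Euler–Lagrange equation of the functional ∫ L(λ) dx dy. -/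
open Real Finset

/-- The Lagrangian density of Theorem 6. -/
noncomputable def lagDensity (a₁₁ a₁₂ a₂₂ : ℝ) (f : ℝ × ℝ → ℝ) : ℝ × ℝ → ℝ :=
  fun z => (1 / 2) *
    (4 * pdy (pdx f) z * (a₂₂ * pdy (pdy f) z - a₁₁ * pdx (pdx f) z)
      + 2 * a₁₂ * ((pdy (pdy f) z) ^ 2 - (pdx (pdx f) z) ^ 2)
      + pdy (pdx f) z * ((pdy (pdy f) z) ^ 2 - (pdx (pdx f) z) ^ 2))

/-- The Euler–Lagrange expression: the left-hand side of equation (9) of the paper. -/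
noncomputable def eulerLagrange (a₁₁ a₁₂ a₂₂ : ℝ) (f : ℝ × ℝ → ℝ) : ℝ × ℝ → ℝ :=
  fun z => pdy (pdx f) z * (pdy (pdy (pdy (pdy f))) z - pdx (pdx (pdx (pdx f))) z)
    + 3 * (pdy (pdy (pdy f)) z * pdy (pdy (pdx f)) z
      - pdy (pdx (pdx f)) z * pdx (pdx (pdx f)) z)
    + 2 * (pdy (pdy f) z * pdy (pdy (pdy (pdx f))) z
      - pdx (pdx f) z * pdy (pdx (pdx (pdx f))) z)
    + 4 * a₂₂ * pdy (pdy (pdy (pdx f))) z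
    - 4 * a₁₁ * pdy (pdx (pdx (pdx f))) z
    + 2 * a₁₂ * (pdy (pdy (pdy (pdy f))) z - pdx (pdx (pdx (pdx f))) z)

/-! ### Auxiliary calculus lemmas for `pdx` and `pdy` -/

open MeasureTheory

lemma hasDerivAt_sliceX {f : ℝ × ℝ → ℝ} {p : ℝ × ℝ} (hf : DifferentiableAt ℝ f p) :
    HasDerivAt (fun s => f (s, p.2)) (fderiv ℝ f p ((1 : ℝ), (0 : ℝ))) p.1 := by
  have h1 : HasDerivAt (fun s : ℝ => (s, p.2)) ((1 : ℝ), (0 : ℝ)) p.1 :=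
    (hasDerivAt_id p.1).prodMk (hasDerivAt_const p.1 p.2)
  have := hf.hasFDerivAt.comp_hasDerivAt p.1 (by simpa using h1)
  exact this

lemma hasDerivAt_sliceY {f : ℝ × ℝ → ℝ} {p : ℝ × ℝ} (hf : DifferentiableAt ℝ f p) :
    HasDerivAt (fun s => f (p.1, s)) (fderiv ℝ f p ((0 : ℝ), (1 : ℝ))) p.2 := by
  have h1 : HasDerivAt (fun s : ℝ => (p.1, s)) ((0 : ℝ), (1 : ℝ)) p.2 :=
    (hasDerivAt_const p.2 p.1).prodMk (hasDerivAt_id p.2)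
  have := hf.hasFDerivAt.comp_hasDerivAt p.2 (by simpa using h1)
  exact this

lemma pdx_eq {f : ℝ × ℝ → ℝ} {p : ℝ × ℝ} (hf : DifferentiableAt ℝ f p) :
    pdx f p = fderiv ℝ f p ((1 : ℝ), (0 : ℝ)) := (hasDerivAt_sliceX hf).deriv

lemma pdy_eq {f : ℝ × ℝ → ℝ} {p : ℝ × ℝ} (hf : DifferentiableAt ℝ f p) :
    pdy f p = fderiv ℝ f p ((0 : ℝ), (1 : ℝ)) := (hasDerivAt_sliceY hf).deriv

lemma contDiff_pdx {f : ℝ × ℝ → ℝ} (hf : ContDiff ℝ (⊤ : ℕ∞) f) : ContDiff ℝ (⊤ : ℕ∞) (pdx f) := by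
  have : pdx f = fun p => fderiv ℝ f p ((1 : ℝ), (0 : ℝ)) := by
    funext p; exact pdx_eq (hf.differentiable (by simp) |>.differentiableAt)
  rw [this]
  exact (hf.fderiv_right (by simp)).clm_apply contDiff_const

lemma contDiff_pdy {f : ℝ × ℝ → ℝ} (hf : ContDiff ℝ (⊤ : ℕ∞) f) : ContDiff ℝ (⊤ : ℕ∞) (pdy f) := by
  have : pdy f = fun p => fderiv ℝ f p ((0 : ℝ), (1 : ℝ)) := by
    funext p; exact pdy_eq (hf.differentiable (by simp) |>.differentiableAt)
  rw [this]
  exact (hf.fderiv_right (by simp)).clm_apply contDiff_const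

lemma pdx_pdy_comm {f : ℝ × ℝ → ℝ} (hf : ContDiff ℝ (⊤ : ℕ∞) f) : pdx (pdy f) = pdy (pdx f) := by
  funext p
  have hdf : Differentiable ℝ f := hf.differentiable (by simp)
  have hpdy : pdy f = fun q => fderiv ℝ f q ((0 : ℝ), (1 : ℝ)) := by
    funext q; exact pdy_eq (hdf q)
  have hpdx : pdx f = fun q => fderiv ℝ f q ((1 : ℝ), (0 : ℝ)) := by
    funext q; exact pdx_eq (hdf q)
  have hf' : ContDiff ℝ (⊤ : ℕ∞) (fderiv ℝ f) := hf.fderiv_right (by simp)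
  have hdiff' : DifferentiableAt ℝ (fderiv ℝ f) p := (hf'.differentiable (by simp)) p
  have hsymm : ∀ v w : ℝ × ℝ,
      fderiv ℝ (fderiv ℝ f) p v w = fderiv ℝ (fderiv ℝ f) p w v :=
    second_derivative_symmetric (fun y => (hdf y).hasFDerivAt) hdiff'.hasFDerivAt
  have h1 : pdx (pdy f) p = fderiv ℝ (fderiv ℝ f) p ((1:ℝ),(0:ℝ)) ((0:ℝ),(1:ℝ)) := by
    rw [pdx_eq (by rw [hpdy]; exact ((hf'.clm_apply contDiff_const).differentiable (by simp)).differentiableAt)]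
    rw [hpdy, fderiv_clm_apply hdiff' (differentiableAt_const _)]
    simp
  have h2 : pdy (pdx f) p = fderiv ℝ (fderiv ℝ f) p ((0:ℝ),(1:ℝ)) ((1:ℝ),(0:ℝ)) := by
    rw [pdy_eq (by rw [hpdx]; exact ((hf'.clm_apply contDiff_const).differentiable (by simp)).differentiableAt)]
    rw [hpdx, fderiv_clm_apply hdiff' (differentiableAt_const _)]
    simp
  rw [h1, h2, hsymm]

lemma hasDerivAt_pdx {f : ℝ × ℝ → ℝ} (hf : ContDiff ℝ (⊤ : ℕ∞) f) (z : ℝ × ℝ) :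
    HasDerivAt (fun s => f (s, z.2)) (pdx f z) z.1 := by
  rw [pdx_eq ((hf.differentiable (by simp)) z)]
  exact hasDerivAt_sliceX ((hf.differentiable (by simp)) z)

lemma hasDerivAt_pdy {f : ℝ × ℝ → ℝ} (hf : ContDiff ℝ (⊤ : ℕ∞) f) (z : ℝ × ℝ) :
    HasDerivAt (fun s => f (z.1, s)) (pdy f z) z.2 := by
  rw [pdy_eq ((hf.differentiable (by simp)) z)]
  exact hasDerivAt_sliceY ((hf.differentiable (by simp)) z)

lemma pdx_support {f : ℝ × ℝ → ℝ} : Function.support (pdx f) ⊆ tsupport f := by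
  intro p hp
  by_contra hmem
  apply hp
  have hopen : IsOpen (tsupport f)ᶜ := (isClosed_tsupport f).isOpen_compl
  have hev : (fun s => f (s, p.2)) =ᶠ[nhds p.1] (fun _ => (0:ℝ)) := by
    have : {s : ℝ | (s, p.2) ∈ (tsupport f)ᶜ} ∈ nhds p.1 := by
      have hc : Continuous (fun s : ℝ => (s, p.2)) := continuous_id.prodMk continuous_const
      exact hc.continuousAt.preimage_mem_nhds (hopen.mem_nhds hmem)
    filter_upwards [this] with s hs
    exact image_eq_zero_of_notMem_tsupport hs
  show deriv (fun s => f (s, p.2)) p.1 = 0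
  rw [hev.deriv_eq]
  simp

lemma pdy_support {f : ℝ × ℝ → ℝ} : Function.support (pdy f) ⊆ tsupport f := by
  intro p hp
  by_contra hmem
  apply hp
  have hopen : IsOpen (tsupport f)ᶜ := (isClosed_tsupport f).isOpen_compl
  have hev : (fun s => f (p.1, s)) =ᶠ[nhds p.2] (fun _ => (0:ℝ)) := by
    have : {s : ℝ | (p.1, s) ∈ (tsupport f)ᶜ} ∈ nhds p.2 := by
      have hc : Continuous (fun s : ℝ => (p.1, s)) := continuous_const.prodMk continuous_id
      exact hc.continuousAt.preimage_mem_nhds (hopen.mem_nhds hmem)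
    filter_upwards [this] with s hs
    exact image_eq_zero_of_notMem_tsupport hs
  show deriv (fun s => f (p.1, s)) p.2 = 0
  rw [hev.deriv_eq]
  simp

lemma pdx_compactSupport {f : ℝ × ℝ → ℝ} (hf : HasCompactSupport f) :
    HasCompactSupport (pdx f) := hf.mono' pdx_support

lemma pdy_compactSupport {f : ℝ × ℝ → ℝ} (hf : HasCompactSupport f) :
    HasCompactSupport (pdy f) := hf.mono' pdy_support

lemma integral_deriv_zero {F : ℝ → ℝ} (hF : ContDiff ℝ 1 F) (hc : HasCompactSupport F) :
    ∫ x : ℝ, deriv F x = 0 := by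
  have hcont : Continuous (deriv F) := hF.continuous_deriv le_rfl
  have hder : HasCompactSupport (deriv F) := hc.deriv
  have hint : Integrable (deriv F) := hcont.integrable_of_hasCompactSupport hder
  have h1 := hc.integral_Iic_deriv_eq hF 0
  have h2 := hc.integral_Ioi_deriv_eq hF 0
  rw [← intervalIntegral.integral_Iic_add_Ioi hint.integrableOn hint.integrableOn, h1, h2]
  ring

lemma slice_compactSupportX {F : ℝ × ℝ → ℝ} (hc : HasCompactSupport F) (y : ℝ) :
    HasCompactSupport (fun s => F (s, y)) := by
  apply HasCompactSupport.intro (hc.image continuous_fst)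
  intro s hs
  by_contra h0
  exact hs ⟨(s, y), subset_tsupport F h0, rfl⟩

lemma slice_compactSupportY {F : ℝ × ℝ → ℝ} (hc : HasCompactSupport F) (x : ℝ) :
    HasCompactSupport (fun s => F (x, s)) := by
  apply HasCompactSupport.intro (hc.image continuous_snd)
  intro s hs
  by_contra h0
  exact hs ⟨(x, s), subset_tsupport F h0, rfl⟩

lemma contDiff_sliceX {F : ℝ × ℝ → ℝ} (hF : ContDiff ℝ (⊤ : ℕ∞) F) (y : ℝ) :
    ContDiff ℝ 1 (fun s => F (s, y)) :=
  (hF.of_le (by simp)).comp (contDiff_id.prodMk contDiff_const)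

lemma contDiff_sliceY {F : ℝ × ℝ → ℝ} (hF : ContDiff ℝ (⊤ : ℕ∞) F) (x : ℝ) :
    ContDiff ℝ 1 (fun s => F (x, s)) :=
  (hF.of_le (by simp)).comp (contDiff_const.prodMk contDiff_id)

lemma integral_pdx_zero {F : ℝ × ℝ → ℝ} (hF : ContDiff ℝ (⊤ : ℕ∞) F) (hc : HasCompactSupport F) :
    ∫ z : ℝ × ℝ, pdx F z = 0 := by
  have hcont : Continuous (pdx F) := (contDiff_pdx hF).continuous
  have hint : Integrable (pdx F) := hcont.integrable_of_hasCompactSupport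
    (pdx_compactSupport hc)
  rw [MeasureTheory.Measure.volume_eq_prod] at hint ⊢
  rw [MeasureTheory.integral_prod_symm _ hint]
  have : ∀ y : ℝ, ∫ x : ℝ, pdx F (x, y) = 0 := by
    intro y
    have : ∀ x : ℝ, pdx F (x, y) = deriv (fun s => F (s, y)) x := fun x => rfl
    simp_rw [this]
    exact integral_deriv_zero (contDiff_sliceX hF y) (slice_compactSupportX hc y)
  simp_rw [this]
  simp

lemma integral_pdy_zero {F : ℝ × ℝ → ℝ} (hF : ContDiff ℝ (⊤ : ℕ∞) F) (hc : HasCompactSupport F) :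
    ∫ z : ℝ × ℝ, pdy F z = 0 := by
  have hcont : Continuous (pdy F) := (contDiff_pdy hF).continuous
  have hint : Integrable (pdy F) := hcont.integrable_of_hasCompactSupport
    (pdy_compactSupport hc)
  rw [MeasureTheory.Measure.volume_eq_prod] at hint ⊢
  rw [MeasureTheory.integral_prod _ hint]
  have : ∀ x : ℝ, ∫ y : ℝ, pdy F (x, y) = 0 := by
    intro x
    have : ∀ y : ℝ, pdy F (x, y) = deriv (fun s => F (x, s)) y := fun y => rfl
    simp_rw [this]
    exact integral_deriv_zero (contDiff_sliceY hF x) (slice_compactSupportY hc x)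
  simp_rw [this]
  simp

lemma pdx_mul {f g : ℝ × ℝ → ℝ} (hf : ContDiff ℝ (⊤ : ℕ∞) f) (hg : ContDiff ℝ (⊤ : ℕ∞) g) :
    pdx (fun u => f u * g u) = fun z => pdx f z * g z + f z * pdx g z := by
  funext z
  exact ((hasDerivAt_pdx hf z).mul (hasDerivAt_pdx hg z)).deriv

lemma pdy_mul {f g : ℝ × ℝ → ℝ} (hf : ContDiff ℝ (⊤ : ℕ∞) f) (hg : ContDiff ℝ (⊤ : ℕ∞) g) :
    pdy (fun u => f u * g u) = fun z => pdy f z * g z + f z * pdy g z := by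
  funext z
  exact ((hasDerivAt_pdy hf z).mul (hasDerivAt_pdy hg z)).deriv

lemma integrable_mul_cs {g h : ℝ × ℝ → ℝ} (hg : Continuous g) (hh : Continuous h)
    (hhc : HasCompactSupport h) : Integrable (fun z => g z * h z) :=
  (hg.mul hh).integrable_of_hasCompactSupport (HasCompactSupport.mul_left hhc)

lemma ibp_x {g h : ℝ × ℝ → ℝ} (hg : ContDiff ℝ (⊤ : ℕ∞) g) (hh : ContDiff ℝ (⊤ : ℕ∞) h)
    (hhc : HasCompactSupport h) :
    ∫ z : ℝ × ℝ, g z * pdx h z = - ∫ z : ℝ × ℝ, pdx g z * h z := by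
  have h0 := integral_pdx_zero (hg.mul hh) (HasCompactSupport.mul_left hhc)
  rw [pdx_mul hg hh] at h0
  have hint1 : Integrable (fun z : ℝ × ℝ => pdx g z * h z) :=
    integrable_mul_cs (contDiff_pdx hg).continuous hh.continuous hhc
  have hint2 : Integrable (fun z : ℝ × ℝ => g z * pdx h z) :=
    integrable_mul_cs hg.continuous (contDiff_pdx hh).continuous (pdx_compactSupport hhc)
  rw [MeasureTheory.integral_add hint1 hint2] at h0
  linarith

lemma ibp_y {g h : ℝ × ℝ → ℝ} (hg : ContDiff ℝ (⊤ : ℕ∞) g) (hh : ContDiff ℝ (⊤ : ℕ∞) h)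
    (hhc : HasCompactSupport h) :
    ∫ z : ℝ × ℝ, g z * pdy h z = - ∫ z : ℝ × ℝ, pdy g z * h z := by
  have h0 := integral_pdy_zero (hg.mul hh) (HasCompactSupport.mul_left hhc)
  rw [pdy_mul hg hh] at h0
  have hint1 : Integrable (fun z : ℝ × ℝ => pdy g z * h z) :=
    integrable_mul_cs (contDiff_pdy hg).continuous hh.continuous hhc
  have hint2 : Integrable (fun z : ℝ × ℝ => g z * pdy h z) :=
    integrable_mul_cs hg.continuous (contDiff_pdy hh).continuous (pdy_compactSupport hhc)
  rw [MeasureTheory.integral_add hint1 hint2] at h0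
  linarith

lemma ibp_xx {g h : ℝ × ℝ → ℝ} (hg : ContDiff ℝ (⊤ : ℕ∞) g) (hh : ContDiff ℝ (⊤ : ℕ∞) h)
    (hhc : HasCompactSupport h) :
    ∫ z : ℝ × ℝ, g z * pdx (pdx h) z = ∫ z : ℝ × ℝ, pdx (pdx g) z * h z := by
  rw [ibp_x hg (contDiff_pdx hh) (pdx_compactSupport hhc),
    ibp_x (contDiff_pdx hg) hh hhc, neg_neg]

lemma ibp_yy {g h : ℝ × ℝ → ℝ} (hg : ContDiff ℝ (⊤ : ℕ∞) g) (hh : ContDiff ℝ (⊤ : ℕ∞) h)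
    (hhc : HasCompactSupport h) :
    ∫ z : ℝ × ℝ, g z * pdy (pdy h) z = ∫ z : ℝ × ℝ, pdy (pdy g) z * h z := by
  rw [ibp_y hg (contDiff_pdy hh) (pdy_compactSupport hhc),
    ibp_y (contDiff_pdy hg) hh hhc, neg_neg]

lemma ibp_xy {g h : ℝ × ℝ → ℝ} (hg : ContDiff ℝ (⊤ : ℕ∞) g) (hh : ContDiff ℝ (⊤ : ℕ∞) h)
    (hhc : HasCompactSupport h) :
    ∫ z : ℝ × ℝ, g z * pdy (pdx h) z = ∫ z : ℝ × ℝ, pdx (pdy g) z * h z := by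
  rw [ibp_y hg (contDiff_pdx hh) (pdx_compactSupport hhc),
    ibp_x (contDiff_pdy hg) hh hhc, neg_neg]

lemma pdx_add_const_mul {f g : ℝ × ℝ → ℝ} (hf : ContDiff ℝ (⊤ : ℕ∞) f) (hg : ContDiff ℝ (⊤ : ℕ∞) g)
    (t : ℝ) : pdx (fun u => f u + t * g u) = fun z => pdx f z + t * pdx g z := by
  funext z
  exact ((hasDerivAt_pdx hf z).add ((hasDerivAt_pdx hg z).const_mul t)).deriv

lemma pdy_add_const_mul {f g : ℝ × ℝ → ℝ} (hf : ContDiff ℝ (⊤ : ℕ∞) f) (hg : ContDiff ℝ (⊤ : ℕ∞) g)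
    (t : ℝ) : pdy (fun u => f u + t * g u) = fun z => pdy f z + t * pdy g z := by
  funext z
  exact ((hasDerivAt_pdy hf z).add ((hasDerivAt_pdy hg z).const_mul t)).deriv

/-! ### The coefficient functions of the first variation -/

noncomputable def eulG1 (a₁₁ a₂₂ : ℝ) (lam : ℝ × ℝ → ℝ) : ℝ × ℝ → ℝ := fun z =>
  2 * (a₂₂ * pdy (pdy lam) z - a₁₁ * pdx (pdx lam) z)
    + (1/2) * (pdy (pdy lam) z * pdy (pdy lam) z - pdx (pdx lam) z * pdx (pdx lam) z)

noncomputable def eulG2 (a₁₂ a₂₂ : ℝ) (lam : ℝ × ℝ → ℝ) : ℝ × ℝ → ℝ := fun z =>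
  2 * a₂₂ * pdy (pdx lam) z + 2 * a₁₂ * pdy (pdy lam) z + pdy (pdx lam) z * pdy (pdy lam) z

noncomputable def eulG3 (a₁₁ a₁₂ : ℝ) (lam : ℝ × ℝ → ℝ) : ℝ × ℝ → ℝ := fun z =>
  -(2 * a₁₁ * pdy (pdx lam) z) - 2 * a₁₂ * pdx (pdx lam) z
    - pdy (pdx lam) z * pdx (pdx lam) z

noncomputable def varA (a₁₁ a₁₂ a₂₂ : ℝ) (lam φ : ℝ × ℝ → ℝ) : ℝ × ℝ → ℝ := fun z =>
  eulG1 a₁₁ a₂₂ lam z * pdy (pdx φ) z + eulG2 a₁₂ a₂₂ lam z * pdy (pdy φ) z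
    + eulG3 a₁₁ a₁₂ lam z * pdx (pdx φ) z

noncomputable def varB (a₁₁ a₁₂ a₂₂ : ℝ) (lam φ : ℝ × ℝ → ℝ) : ℝ × ℝ → ℝ := fun z =>
  (2 * a₂₂ * pdy (pdx φ) z + a₁₂ * pdy (pdy φ) z + pdy (pdx φ) z * pdy (pdy lam) z
      + (1/2) * pdy (pdx lam) z * pdy (pdy φ) z) * pdy (pdy φ) z
    + (-(2 * a₁₁ * pdy (pdx φ) z) - a₁₂ * pdx (pdx φ) z - pdy (pdx φ) z * pdx (pdx lam) z
      - (1/2) * pdy (pdx lam) z * pdx (pdx φ) z) * pdx (pdx φ) z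

noncomputable def varC (φ : ℝ × ℝ → ℝ) : ℝ × ℝ → ℝ := fun z =>
  ((1/2) * pdy (pdx φ) z * pdy (pdy φ) z) * pdy (pdy φ) z
    + (-((1/2) * pdy (pdx φ) z * pdx (pdx φ) z)) * pdx (pdx φ) z

section coeffs

variable {a₁₁ a₁₂ a₂₂ : ℝ} {lam : ℝ × ℝ → ℝ} (hlam : ContDiff ℝ (⊤ : ℕ∞) lam)
include hlam

lemma contDiff_eulG1 : ContDiff ℝ (⊤ : ℕ∞) (eulG1 a₁₁ a₂₂ lam) := by
  have cX : ContDiff ℝ (⊤ : ℕ∞) (pdx (pdx lam)) := contDiff_pdx (contDiff_pdx hlam)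
  have cY : ContDiff ℝ (⊤ : ℕ∞) (pdy (pdy lam)) := contDiff_pdy (contDiff_pdy hlam)
  exact ((contDiff_const.mul ((contDiff_const.mul cY).sub (contDiff_const.mul cX)))).add
    (contDiff_const.mul ((cY.mul cY).sub (cX.mul cX)))

lemma contDiff_eulG2 : ContDiff ℝ (⊤ : ℕ∞) (eulG2 a₁₂ a₂₂ lam) := by
  have cM : ContDiff ℝ (⊤ : ℕ∞) (pdy (pdx lam)) := contDiff_pdy (contDiff_pdx hlam)
  have cY : ContDiff ℝ (⊤ : ℕ∞) (pdy (pdy lam)) := contDiff_pdy (contDiff_pdy hlam)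
  exact ((contDiff_const.mul cM).add (contDiff_const.mul cY)).add (cM.mul cY)

lemma contDiff_eulG3 : ContDiff ℝ (⊤ : ℕ∞) (eulG3 a₁₁ a₁₂ lam) := by
  have cM : ContDiff ℝ (⊤ : ℕ∞) (pdy (pdx lam)) := contDiff_pdy (contDiff_pdx hlam)
  have cX : ContDiff ℝ (⊤ : ℕ∞) (pdx (pdx lam)) := contDiff_pdx (contDiff_pdx hlam)
  exact (((contDiff_const.mul cM).neg).sub (contDiff_const.mul cX)).sub (cM.mul cX)

lemma pdy_eulG1 : pdy (eulG1 a₁₁ a₂₂ lam) = fun z =>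
    2 * (a₂₂ * pdy (pdy (pdy lam)) z - a₁₁ * pdy (pdx (pdx lam)) z)
      + (1/2) * (pdy (pdy (pdy lam)) z * pdy (pdy lam) z + pdy (pdy lam) z * pdy (pdy (pdy lam)) z
        - (pdy (pdx (pdx lam)) z * pdx (pdx lam) z + pdx (pdx lam) z * pdy (pdx (pdx lam)) z)) := by
  have cX : ContDiff ℝ (⊤ : ℕ∞) (pdx (pdx lam)) := contDiff_pdx (contDiff_pdx hlam)
  have cY : ContDiff ℝ (⊤ : ℕ∞) (pdy (pdy lam)) := contDiff_pdy (contDiff_pdy hlam)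
  funext z
  have hX := hasDerivAt_pdy cX z
  have hY := hasDerivAt_pdy cY z
  exact ((((hY.const_mul a₂₂).sub (hX.const_mul a₁₁)).const_mul 2).add
    (((hY.mul hY).sub (hX.mul hX)).const_mul (1/2))).deriv.trans (by ring)

lemma pdxpdy_eulG1 : pdx (pdy (eulG1 a₁₁ a₂₂ lam)) = fun z =>
    2 * (a₂₂ * pdx (pdy (pdy (pdy lam))) z - a₁₁ * pdx (pdy (pdx (pdx lam))) z)
      + (1/2) * (pdx (pdy (pdy (pdy lam))) z * pdy (pdy lam) z
        + pdy (pdy (pdy lam)) z * pdx (pdy (pdy lam)) z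
        + pdx (pdy (pdy lam)) z * pdy (pdy (pdy lam)) z
        + pdy (pdy lam) z * pdx (pdy (pdy (pdy lam))) z
        - (pdx (pdy (pdx (pdx lam))) z * pdx (pdx lam) z
          + pdy (pdx (pdx lam)) z * pdx (pdx (pdx lam)) z
          + pdx (pdx (pdx lam)) z * pdy (pdx (pdx lam)) z
          + pdx (pdx lam) z * pdx (pdy (pdx (pdx lam))) z)) := by
  rw [pdy_eulG1 hlam]
  have cX : ContDiff ℝ (⊤ : ℕ∞) (pdx (pdx lam)) := contDiff_pdx (contDiff_pdx hlam)
  have cY : ContDiff ℝ (⊤ : ℕ∞) (pdy (pdy lam)) := contDiff_pdy (contDiff_pdy hlam)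
  have cc03 : ContDiff ℝ (⊤ : ℕ∞) (pdy (pdy (pdy lam))) := contDiff_pdy cY
  have cc21 : ContDiff ℝ (⊤ : ℕ∞) (pdy (pdx (pdx lam))) := contDiff_pdy cX
  funext z
  have hX := hasDerivAt_pdx cX z
  have hY := hasDerivAt_pdx cY z
  have h03 := hasDerivAt_pdx cc03 z
  have h21 := hasDerivAt_pdx cc21 z
  exact ((((h03.const_mul a₂₂).sub (h21.const_mul a₁₁)).const_mul 2).add
    ((((h03.mul hY).add (hY.mul h03)).sub ((h21.mul hX).add (hX.mul h21))).const_mul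
      (1/2))).deriv.trans (by ring)

lemma pdy_eulG2 : pdy (eulG2 a₁₂ a₂₂ lam) = fun z =>
    2 * a₂₂ * pdy (pdy (pdx lam)) z + 2 * a₁₂ * pdy (pdy (pdy lam)) z
      + (pdy (pdy (pdx lam)) z * pdy (pdy lam) z + pdy (pdx lam) z * pdy (pdy (pdy lam)) z) := by
  have cM : ContDiff ℝ (⊤ : ℕ∞) (pdy (pdx lam)) := contDiff_pdy (contDiff_pdx hlam)
  have cY : ContDiff ℝ (⊤ : ℕ∞) (pdy (pdy lam)) := contDiff_pdy (contDiff_pdy hlam)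
  funext z
  have hM := hasDerivAt_pdy cM z
  have hY := hasDerivAt_pdy cY z
  exact (((hM.const_mul (2 * a₂₂)).add (hY.const_mul (2 * a₁₂))).add
    (hM.mul hY)).deriv.trans (by ring)

lemma pdypdy_eulG2 : pdy (pdy (eulG2 a₁₂ a₂₂ lam)) = fun z =>
    2 * a₂₂ * pdy (pdy (pdy (pdx lam))) z + 2 * a₁₂ * pdy (pdy (pdy (pdy lam))) z
      + pdy (pdy (pdy (pdx lam))) z * pdy (pdy lam) z
      + 2 * (pdy (pdy (pdx lam)) z * pdy (pdy (pdy lam)) z)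
      + pdy (pdx lam) z * pdy (pdy (pdy (pdy lam))) z := by
  rw [pdy_eulG2 hlam]
  have cM : ContDiff ℝ (⊤ : ℕ∞) (pdy (pdx lam)) := contDiff_pdy (contDiff_pdx hlam)
  have cY : ContDiff ℝ (⊤ : ℕ∞) (pdy (pdy lam)) := contDiff_pdy (contDiff_pdy hlam)
  have cMy : ContDiff ℝ (⊤ : ℕ∞) (pdy (pdy (pdx lam))) := contDiff_pdy cM
  have cc03 : ContDiff ℝ (⊤ : ℕ∞) (pdy (pdy (pdy lam))) := contDiff_pdy cY
  funext z
  have hM := hasDerivAt_pdy cM z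
  have hY := hasDerivAt_pdy cY z
  have hMy := hasDerivAt_pdy cMy z
  have h03 := hasDerivAt_pdy cc03 z
  exact (((hMy.const_mul (2 * a₂₂)).add (h03.const_mul (2 * a₁₂))).add
    ((hMy.mul hY).add (hM.mul h03))).deriv.trans (by ring)

lemma pdx_eulG3 : pdx (eulG3 a₁₁ a₁₂ lam) = fun z =>
    -(2 * a₁₁ * pdx (pdy (pdx lam)) z) - 2 * a₁₂ * pdx (pdx (pdx lam)) z
      - (pdx (pdy (pdx lam)) z * pdx (pdx lam) z + pdy (pdx lam) z * pdx (pdx (pdx lam)) z) := by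
  have cM : ContDiff ℝ (⊤ : ℕ∞) (pdy (pdx lam)) := contDiff_pdy (contDiff_pdx hlam)
  have cX : ContDiff ℝ (⊤ : ℕ∞) (pdx (pdx lam)) := contDiff_pdx (contDiff_pdx hlam)
  funext z
  have hM := hasDerivAt_pdx cM z
  have hX := hasDerivAt_pdx cX z
  exact ((((hM.const_mul (2 * a₁₁)).neg).sub (hX.const_mul (2 * a₁₂))).sub
    (hM.mul hX)).deriv.trans (by ring)

lemma pdxpdx_eulG3 : pdx (pdx (eulG3 a₁₁ a₁₂ lam)) = fun z =>
    -(2 * a₁₁ * pdx (pdx (pdy (pdx lam))) z) - 2 * a₁₂ * pdx (pdx (pdx (pdx lam))) z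
      - (pdx (pdx (pdy (pdx lam))) z * pdx (pdx lam) z
        + 2 * (pdx (pdy (pdx lam)) z * pdx (pdx (pdx lam)) z)
        + pdy (pdx lam) z * pdx (pdx (pdx (pdx lam))) z) := by
  rw [pdx_eulG3 hlam]
  have cM : ContDiff ℝ (⊤ : ℕ∞) (pdy (pdx lam)) := contDiff_pdy (contDiff_pdx hlam)
  have cX : ContDiff ℝ (⊤ : ℕ∞) (pdx (pdx lam)) := contDiff_pdx (contDiff_pdx hlam)
  have cMx : ContDiff ℝ (⊤ : ℕ∞) (pdx (pdy (pdx lam))) := contDiff_pdx cM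
  have cc30 : ContDiff ℝ (⊤ : ℕ∞) (pdx (pdx (pdx lam))) := contDiff_pdx cX
  funext z
  have hM := hasDerivAt_pdx cM z
  have hX := hasDerivAt_pdx cX z
  have hMx := hasDerivAt_pdx cMx z
  have h30 := hasDerivAt_pdx cc30 z
  exact ((((hMx.const_mul (2 * a₁₁)).neg).sub (h30.const_mul (2 * a₁₂))).sub
    ((hMx.mul hX).add (hM.mul h30))).deriv.trans (by ring)

end coeffs

theorem fourth_order_equation_is_euler_lagrange
    (a₁₁ a₁₂ a₂₂ : ℝ)
    (lam : ℝ × ℝ → ℝ) (hlam : ContDiff ℝ (⊤ : ℕ∞) lam)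
    (φ : ℝ × ℝ → ℝ) (hφ : ContDiff ℝ (⊤ : ℕ∞) φ) (hφc : HasCompactSupport φ) :
    HasDerivAt
      (fun t : ℝ => ∫ z : ℝ × ℝ,
        (lagDensity a₁₁ a₁₂ a₂₂ (fun u => lam u + t * φ u) z
          - lagDensity a₁₁ a₁₂ a₂₂ lam z))
      (∫ z : ℝ × ℝ, eulerLagrange a₁₁ a₁₂ a₂₂ lam z * φ z) 0 := by
  -- smoothness / support facts
  have cX : ContDiff ℝ (⊤ : ℕ∞) (pdx (pdx lam)) := contDiff_pdx (contDiff_pdx hlam)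
  have cY : ContDiff ℝ (⊤ : ℕ∞) (pdy (pdy lam)) := contDiff_pdy (contDiff_pdy hlam)
  have cM : ContDiff ℝ (⊤ : ℕ∞) (pdy (pdx lam)) := contDiff_pdy (contDiff_pdx hlam)
  have cpx : Continuous (pdx (pdx φ)) := (contDiff_pdx (contDiff_pdx hφ)).continuous
  have cpy : Continuous (pdy (pdy φ)) := (contDiff_pdy (contDiff_pdy hφ)).continuous
  have cpm : Continuous (pdy (pdx φ)) := (contDiff_pdy (contDiff_pdx hφ)).continuous
  have hxc : HasCompactSupport (pdx (pdx φ)) := pdx_compactSupport (pdx_compactSupport hφc)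
  have hyc : HasCompactSupport (pdy (pdy φ)) := pdy_compactSupport (pdy_compactSupport hφc)
  have hmc : HasCompactSupport (pdy (pdx φ)) := pdy_compactSupport (pdx_compactSupport hφc)
  have hG1 := contDiff_eulG1 (a₁₁ := a₁₁) (a₂₂ := a₂₂) hlam
  have hG2 := contDiff_eulG2 (a₁₂ := a₁₂) (a₂₂ := a₂₂) hlam
  have hG3 := contDiff_eulG3 (a₁₁ := a₁₁) (a₁₂ := a₁₂) hlam
  -- pointwise expansion in t
  have expand : ∀ (t : ℝ) (z : ℝ × ℝ),
      lagDensity a₁₁ a₁₂ a₂₂ (fun u => lam u + t * φ u) z - lagDensity a₁₁ a₁₂ a₂₂ lam z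
        = t * varA a₁₁ a₁₂ a₂₂ lam φ z
          + (t^2 * varB a₁₁ a₁₂ a₂₂ lam φ z + t^3 * varC φ z) := by
    intro t z
    have e1 : pdx (pdx (fun u => lam u + t * φ u))
        = fun z => pdx (pdx lam) z + t * pdx (pdx φ) z := by
      rw [pdx_add_const_mul hlam hφ t]
      exact pdx_add_const_mul (contDiff_pdx hlam) (contDiff_pdx hφ) t
    have e2 : pdy (pdy (fun u => lam u + t * φ u))
        = fun z => pdy (pdy lam) z + t * pdy (pdy φ) z := by
      rw [pdy_add_const_mul hlam hφ t]
      exact pdy_add_const_mul (contDiff_pdy hlam) (contDiff_pdy hφ) t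
    have e3 : pdy (pdx (fun u => lam u + t * φ u))
        = fun z => pdy (pdx lam) z + t * pdy (pdx φ) z := by
      rw [pdx_add_const_mul hlam hφ t]
      exact pdy_add_const_mul (contDiff_pdx hlam) (contDiff_pdx hφ) t
    simp only [lagDensity, varA, varB, varC, eulG1, eulG2, eulG3, e1, e2, e3]
    ring
  -- integrability
  have hiA : Integrable (varA a₁₁ a₁₂ a₂₂ lam φ) := by
    unfold varA
    exact ((integrable_mul_cs hG1.continuous cpm hmc).add
      (integrable_mul_cs hG2.continuous cpy hyc)).add
      (integrable_mul_cs hG3.continuous cpx hxc)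
  have hiB : Integrable (varB a₁₁ a₁₂ a₂₂ lam φ) := by
    unfold varB
    refine (integrable_mul_cs ?_ cpy hyc).add (integrable_mul_cs ?_ cpx hxc)
    · exact (((continuous_const.mul cpm).add (continuous_const.mul cpy)).add
        (cpm.mul cY.continuous)).add ((continuous_const.mul cM.continuous).mul cpy)
    · exact ((((continuous_const.mul cpm).neg).sub (continuous_const.mul cpx)).sub
        (cpm.mul cX.continuous)).sub ((continuous_const.mul cM.continuous).mul cpx)
  have hiC : Integrable (varC φ) := by
    unfold varC
    exact (integrable_mul_cs ((continuous_const.mul cpm).mul cpy) cpy hyc).add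
      (integrable_mul_cs ((continuous_const.mul cpm).mul cpx).neg cpx hxc)
  -- the integral is a cubic polynomial in t
  have key : ∀ t : ℝ,
      (∫ z : ℝ × ℝ, (lagDensity a₁₁ a₁₂ a₂₂ (fun u => lam u + t * φ u) z
          - lagDensity a₁₁ a₁₂ a₂₂ lam z))
        = t * (∫ z : ℝ × ℝ, varA a₁₁ a₁₂ a₂₂ lam φ z)
          + (t^2 * (∫ z : ℝ × ℝ, varB a₁₁ a₁₂ a₂₂ lam φ z)
            + t^3 * (∫ z : ℝ × ℝ, varC φ z)) := by
    intro t
    have hB' : Integrable (fun z : ℝ × ℝ => t^2 * varB a₁₁ a₁₂ a₂₂ lam φ z) :=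
      hiB.const_mul (t^2)
    have hC' : Integrable (fun z : ℝ × ℝ => t^3 * varC φ z) := hiC.const_mul (t^3)
    have hA' : Integrable (fun z : ℝ × ℝ => t * varA a₁₁ a₁₂ a₂₂ lam φ z) := hiA.const_mul t
    have hBC : Integrable (fun z : ℝ × ℝ => t^2 * varB a₁₁ a₁₂ a₂₂ lam φ z
        + t^3 * varC φ z) := hB'.add hC'
    rw [MeasureTheory.integral_congr_ae (Filter.Eventually.of_forall (expand t))]
    rw [MeasureTheory.integral_add hA' hBC, MeasureTheory.integral_add hB' hC',
      MeasureTheory.integral_const_mul, MeasureTheory.integral_const_mul,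
      MeasureTheory.integral_const_mul]
  -- the derivative of that polynomial at 0
  have hpoly : HasDerivAt (fun t : ℝ =>
      t * (∫ z : ℝ × ℝ, varA a₁₁ a₁₂ a₂₂ lam φ z)
        + (t^2 * (∫ z : ℝ × ℝ, varB a₁₁ a₁₂ a₂₂ lam φ z)
          + t^3 * (∫ z : ℝ × ℝ, varC φ z)))
      (∫ z : ℝ × ℝ, varA a₁₁ a₁₂ a₂₂ lam φ z) 0 := by
    have h1 : HasDerivAt (fun t : ℝ => t * (∫ z : ℝ × ℝ, varA a₁₁ a₁₂ a₂₂ lam φ z))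
        (∫ z : ℝ × ℝ, varA a₁₁ a₁₂ a₂₂ lam φ z) 0 := by
      simpa using (hasDerivAt_id (0:ℝ)).mul_const (∫ z : ℝ × ℝ, varA a₁₁ a₁₂ a₂₂ lam φ z)
    have h2 : HasDerivAt (fun t : ℝ => t^2 * (∫ z : ℝ × ℝ, varB a₁₁ a₁₂ a₂₂ lam φ z)) 0 0 := by
      simpa using (hasDerivAt_pow 2 (0:ℝ)).mul_const (∫ z : ℝ × ℝ, varB a₁₁ a₁₂ a₂₂ lam φ z)
    have h3 : HasDerivAt (fun t : ℝ => t^3 * (∫ z : ℝ × ℝ, varC φ z)) 0 0 := by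
      simpa using (hasDerivAt_pow 3 (0:ℝ)).mul_const (∫ z : ℝ × ℝ, varC φ z)
    have := h1.add (h2.add h3)
    simp only [add_zero] at this
    exact this
  -- identification of ∫ varA with ∫ E(lam) φ  (integration by parts)
  have commD : pdx (pdy (pdx lam)) = pdy (pdx (pdx lam)) := pdx_pdy_comm (contDiff_pdx hlam)
  have commA : pdx (pdy (pdy lam)) = pdy (pdy (pdx lam)) :=
    (pdx_pdy_comm (contDiff_pdy hlam)).trans (congrArg pdy (pdx_pdy_comm hlam))
  have commB : pdx (pdy (pdy (pdy lam))) = pdy (pdy (pdy (pdx lam))) :=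
    (pdx_pdy_comm (contDiff_pdy (contDiff_pdy hlam))).trans (congrArg pdy commA)
  have commC : pdx (pdy (pdx (pdx lam))) = pdy (pdx (pdx (pdx lam))) :=
    pdx_pdy_comm (contDiff_pdx (contDiff_pdx hlam))
  have hS : ∀ z : ℝ × ℝ,
      pdx (pdy (eulG1 a₁₁ a₂₂ lam)) z + pdy (pdy (eulG2 a₁₂ a₂₂ lam)) z
        + pdx (pdx (eulG3 a₁₁ a₁₂ lam)) z = eulerLagrange a₁₁ a₁₂ a₂₂ lam z := by
    intro z
    simp only [pdxpdy_eulG1 hlam, pdypdy_eulG2 hlam, pdxpdx_eulG3 hlam,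
      commA, commB, commC, commD, eulerLagrange]
    ring
  have j1 : Integrable (fun z : ℝ × ℝ => pdx (pdy (eulG1 a₁₁ a₂₂ lam)) z * φ z) :=
    integrable_mul_cs (contDiff_pdx (contDiff_pdy hG1)).continuous hφ.continuous hφc
  have j2 : Integrable (fun z : ℝ × ℝ => pdy (pdy (eulG2 a₁₂ a₂₂ lam)) z * φ z) :=
    integrable_mul_cs (contDiff_pdy (contDiff_pdy hG2)).continuous hφ.continuous hφc
  have j3 : Integrable (fun z : ℝ × ℝ => pdx (pdx (eulG3 a₁₁ a₁₂ lam)) z * φ z) :=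
    integrable_mul_cs (contDiff_pdx (contDiff_pdx hG3)).continuous hφ.continuous hφc
  have hAeq : (∫ z : ℝ × ℝ, varA a₁₁ a₁₂ a₂₂ lam φ z)
      = ∫ z : ℝ × ℝ, eulerLagrange a₁₁ a₁₂ a₂₂ lam z * φ z := by
    have i1 := ibp_xy hG1 hφ hφc
    have i2 := ibp_yy hG2 hφ hφc
    have i3 := ibp_xx hG3 hφ hφc
    have iA1 : Integrable (fun z : ℝ × ℝ => eulG1 a₁₁ a₂₂ lam z * pdy (pdx φ) z) :=
      integrable_mul_cs hG1.continuous cpm hmc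
    have iA2 : Integrable (fun z : ℝ × ℝ => eulG2 a₁₂ a₂₂ lam z * pdy (pdy φ) z) :=
      integrable_mul_cs hG2.continuous cpy hyc
    have iA3 : Integrable (fun z : ℝ × ℝ => eulG3 a₁₁ a₁₂ lam z * pdx (pdx φ) z) :=
      integrable_mul_cs hG3.continuous cpx hxc
    calc (∫ z : ℝ × ℝ, varA a₁₁ a₁₂ a₂₂ lam φ z)
        = (∫ z : ℝ × ℝ, eulG1 a₁₁ a₂₂ lam z * pdy (pdx φ) z)
          + (∫ z : ℝ × ℝ, eulG2 a₁₂ a₂₂ lam z * pdy (pdy φ) z)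
          + (∫ z : ℝ × ℝ, eulG3 a₁₁ a₁₂ lam z * pdx (pdx φ) z) := by
          have iA12 : Integrable (fun z : ℝ × ℝ => eulG1 a₁₁ a₂₂ lam z * pdy (pdx φ) z
              + eulG2 a₁₂ a₂₂ lam z * pdy (pdy φ) z) := iA1.add iA2
          unfold varA
          rw [MeasureTheory.integral_add iA12 iA3, MeasureTheory.integral_add iA1 iA2]
      _ = (∫ z : ℝ × ℝ, pdx (pdy (eulG1 a₁₁ a₂₂ lam)) z * φ z)
          + (∫ z : ℝ × ℝ, pdy (pdy (eulG2 a₁₂ a₂₂ lam)) z * φ z)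
          + (∫ z : ℝ × ℝ, pdx (pdx (eulG3 a₁₁ a₁₂ lam)) z * φ z) := by
          rw [i1, i2, i3]
      _ = ∫ z : ℝ × ℝ, (pdx (pdy (eulG1 a₁₁ a₂₂ lam)) z + pdy (pdy (eulG2 a₁₂ a₂₂ lam)) z
            + pdx (pdx (eulG3 a₁₁ a₁₂ lam)) z) * φ z := by
          have j12 : Integrable (fun z : ℝ × ℝ => pdx (pdy (eulG1 a₁₁ a₂₂ lam)) z * φ z
              + pdy (pdy (eulG2 a₁₂ a₂₂ lam)) z * φ z) := j1.add j2
          rw [← MeasureTheory.integral_add j1 j2, ← MeasureTheory.integral_add j12 j3]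
          exact MeasureTheory.integral_congr_ae (Filter.Eventually.of_forall fun z => by ring)
      _ = ∫ z : ℝ × ℝ, eulerLagrange a₁₁ a₁₂ a₂₂ lam z * φ z := by
          exact MeasureTheory.integral_congr_ae
            (Filter.Eventually.of_forall fun z => by simp only [hS])
  have hfun : (fun t : ℝ => ∫ z : ℝ × ℝ,
      (lagDensity a₁₁ a₁₂ a₂₂ (fun u => lam u + t * φ u) z - lagDensity a₁₁ a₁₂ a₂₂ lam z))
      = fun t : ℝ => t * (∫ z : ℝ × ℝ, varA a₁₁ a₁₂ a₂₂ lam φ z)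
        + (t^2 * (∫ z : ℝ × ℝ, varB a₁₁ a₁₂ a₂₂ lam φ z)
          + t^3 * (∫ z : ℝ × ℝ, varC φ z)) := funext key
  rw [hfun, ← hAeq]
  exact hpoly
end
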